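/- arXiv:math/0005116 — 5 statements merged into one kernel-verified Lean document; each statement's English description precedes it below -/
import Mathlib

section
/- The commutator between the Eulerian-Lagrangian derivative and the Eulerian derivative satisfies [∇_A^i, ∂_k] f = C_{m,k;i} ∇_A^m f, where C_{m,k;i} = ∇_A^i(∂_k A_m) = Q_{ji} ∂_j ∂_k A_m. -/
open scoped BigOperators

noncomputable section

/-- Spatial partial derivative `∂_i f` of a scalar function on `ℝ³`. -/
def pd (i : Fin 3) (f : (Fin 3 → ℝ) → ℝ) (x : Fin 3 → ℝ) : ℝ :=
  fderiv ℝ f x (Pi.single i 1)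

lemma contDiff_pd {f : (Fin 3 → ℝ) → ℝ} (hf : ContDiff ℝ (⊤ : ℕ∞) f) (i : Fin 3) :
    ContDiff ℝ (⊤ : ℕ∞) (pd i f) :=
  (hf.fderiv_right (by simp)).clm_apply contDiff_const

lemma pd_comm {f : (Fin 3 → ℝ) → ℝ} (hf : ContDiff ℝ (⊤ : ℕ∞) f) (x : Fin 3 → ℝ) (j k : Fin 3) :
    pd j (pd k f) x = pd k (pd j f) x := by
  have hd : Differentiable ℝ (fderiv ℝ f) := (hf.fderiv_right (m := (⊤ : ℕ∞)) (by simp)).differentiable (by simp)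
  have hsymm : IsSymmSndFDerivAt ℝ f x := hf.contDiffAt.isSymmSndFDerivAt (by rw [minSmoothness_of_isRCLikeNormedField]; exact WithTop.coe_le_coe.2 le_top)
  have key : ∀ a b : Fin 3, pd a (pd b f) x =
      fderiv ℝ (fderiv ℝ f) x (Pi.single a 1) (Pi.single b 1) := by
    intro a b
    show fderiv ℝ (fun y => fderiv ℝ f y (Pi.single b 1)) x (Pi.single a 1) = _
    rw [fderiv_clm_apply (hd x) (differentiableAt_const _)]
    simp
  rw [key, key, hsymm]

lemma pd_mul {g h : (Fin 3 → ℝ) → ℝ} {x : Fin 3 → ℝ} (hg : DifferentiableAt ℝ g x)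
    (hh : DifferentiableAt ℝ h x) (k : Fin 3) :
    pd k (fun y => g y * h y) x = pd k g x * h x + g x * pd k h x := by
  unfold pd
  rw [fderiv_fun_mul hg hh]
  simp
  ring

lemma pd_sum {F : Fin 3 → (Fin 3 → ℝ) → ℝ} {x : Fin 3 → ℝ}
    (hF : ∀ j, DifferentiableAt ℝ (F j) x) (k : Fin 3) :
    pd k (fun y => ∑ j, F j y) x = ∑ j, pd k (F j) x := by
  unfold pd
  rw [fderiv_fun_sum (fun j _ => hF j)]
  simp

lemma pd_const (c : ℝ) (k : Fin 3) (x : Fin 3 → ℝ) : pd k (fun _ => c) x = 0 := by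
  simp [pd]

/-- The commutator `[∇_A^i, ∂_k] f = C_{m,k;i} ∇_A^m f`, with
`C_{m,k;i} = Q_{ji} ∂_j ∂_k A_m` and `∇_A^i = Q_{ji} ∂_j`. -/
theorem commutator_nablaA_partial
    (A : (Fin 3 → ℝ) → Fin 3 → ℝ)
    (hA : ContDiff ℝ (⊤ : ℕ∞) A)
    (Q : (Fin 3 → ℝ) → Fin 3 → Fin 3 → ℝ)
    (hQsmooth : ContDiff ℝ (⊤ : ℕ∞) (fun x => Q x))
    (hQ1 : ∀ (x : Fin 3 → ℝ) (m p : Fin 3),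
      ∑ j, Q x j m * pd j (fun y => A y p) x = if m = p then (1:ℝ) else 0)
    (hQ2 : ∀ (x : Fin 3 → ℝ) (m p : Fin 3),
      ∑ j, pd m (fun y => A y j) x * Q x p j = if m = p then (1:ℝ) else 0)
    (f : (Fin 3 → ℝ) → ℝ) (hf : ContDiff ℝ (⊤ : ℕ∞) f) :
    ∀ (x : Fin 3 → ℝ) (i k : Fin 3),
      (∑ j, Q x j i * pd j (fun y => pd k f y) x)
        - pd k (fun y => ∑ j, Q y j i * pd j f y) x =
      ∑ m, (∑ j, Q x j i * pd j (fun y => pd k (fun z => A z m) y) x)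
        * (∑ j, Q x j m * pd j f x) := by
  intro x i k
  have hAm : ∀ m, ContDiff ℝ (⊤ : ℕ∞) (fun y => A y m) := fun m => contDiff_pi.1 hA m
  have hQjm : ∀ j m, ContDiff ℝ (⊤ : ℕ∞) (fun y => Q y j m) := fun j m =>
    contDiff_pi.1 (contDiff_pi.1 hQsmooth j) m
  -- expand the derivative of the sum
  have expand : ∀ (g : Fin 3 → (Fin 3 → ℝ) → ℝ), (∀ j, ContDiff ℝ (⊤ : ℕ∞) (g j)) →
      pd k (fun y => ∑ j, Q y j i * g j y) x
        = ∑ j, (pd k (fun y => Q y j i) x * g j x + Q x j i * pd k (g j) x) := by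
    intro g hg
    rw [pd_sum (fun j => ((hQjm j i).mul (hg j)).differentiable (by simp) x)]
    exact Finset.sum_congr rfl fun j _ =>
      pd_mul ((hQjm j i).differentiable (by simp) x) ((hg j).differentiable (by simp) x) k
  have hLHS : pd k (fun y => ∑ j, Q y j i * pd j f y) x
      = ∑ j, (pd k (fun y => Q y j i) x * pd j f x + Q x j i * pd j (pd k f) x) := by
    rw [expand (fun j => pd j f) (fun j => contDiff_pd hf j)]
    exact Finset.sum_congr rfl fun j _ => by rw [pd_comm hf x k j]
  -- differentiating hQ1
  have h1 : ∀ m : Fin 3,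
      ∑ j, (pd k (fun y => Q y j i) x * pd j (fun y => A y m) x
        + Q x j i * pd j (fun y => pd k (fun z => A z m) y) x) = 0 := by
    intro m
    have hc : (fun y => ∑ j, Q y j i * pd j (fun z => A z m) y)
        = fun _ => (if i = m then (1:ℝ) else 0) := funext fun y => hQ1 y i m
    have := expand (fun j => pd j (fun z => A z m)) (fun j => contDiff_pd (hAm m) j)
    rw [hc, pd_const] at this
    beta_reduce at this
    rw [this]
    exact Finset.sum_congr rfl fun j _ => by rw [pd_comm (hAm m) x j k]
  rw [hLHS]
  have h2 := fun j l => hQ2 x j l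
  simp only [Fin.sum_univ_three] at h1 h2 ⊢
  have h100 := h1 0; have h101 := h1 1; have h102 := h1 2
  have e00 := h2 0 0; have e01 := h2 0 1; have e02 := h2 0 2
  have e10 := h2 1 0; have e11 := h2 1 1; have e12 := h2 1 2
  have e20 := h2 2 0; have e21 := h2 2 1; have e22 := h2 2 2
  norm_num [Fin.ext_iff] at e00 e01 e02 e10 e11 e12 e20 e21 e22
  linear_combination
    (-(Q x 0 0 * pd 0 f x + Q x 1 0 * pd 1 f x + Q x 2 0 * pd 2 f x)) * h100 +
    (-(Q x 0 1 * pd 0 f x + Q x 1 1 * pd 1 f x + Q x 2 1 * pd 2 f x)) * h101 +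
    (-(Q x 0 2 * pd 0 f x + Q x 1 2 * pd 1 f x + Q x 2 2 * pd 2 f x)) * h102 +
    (pd k (fun y => Q y 0 i) x * pd 0 f x) * e00 +
    (pd k (fun y => Q y 0 i) x * pd 1 f x) * e01 +
    (pd k (fun y => Q y 0 i) x * pd 2 f x) * e02 +
    (pd k (fun y => Q y 1 i) x * pd 0 f x) * e10 +
    (pd k (fun y => Q y 1 i) x * pd 1 f x) * e11 +
    (pd k (fun y => Q y 1 i) x * pd 2 f x) * e12 +
    (pd k (fun y => Q y 2 i) x * pd 0 f x) * e20 +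
    (pd k (fun y => Q y 2 i) x * pd 1 f x) * e21 +
    (pd k (fun y => Q y 2 i) x * pd 2 f x) * e22
end
end

section
/- The commutation relation [Γ, ∇_A^i] g = 2ν C_{m,k;i} ∂_k (∇_A^m g) holds for every smooth function g, where Γ = ∂_t + u·∇ − νΔ, provided ΓA = 0 and Q = (∇A)^{-1} evolves by ΓQ = (∇u)Q + 2ν Q ∂_k(∇A) ∂_k Q. -/
open scoped BigOperators

noncomputable section

/-- Spatial Laplacian `Δ f`. -/
def lap (f : (Fin 3 → ℝ) → ℝ) (x : Fin 3 → ℝ) : ℝ :=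
  ∑ i, pd i (fun y => pd i f y) x

/-- The operator `Γ_ν(u,∇) f = ∂_t f + u·∇f − ν Δf`. -/
def Gam (ν : ℝ) (u : (Fin 3 → ℝ) → ℝ → Fin 3 → ℝ)
    (f : (Fin 3 → ℝ) → ℝ → ℝ) (x : Fin 3 → ℝ) (t : ℝ) : ℝ :=
  deriv (fun s => f x s) t + ∑ j, u x t j * pd j (fun y => f y t) x
    - ν * lap (fun y => f y t) x

namespace NSAux

abbrev E3 := (Fin 3 → ℝ) × ℝ

def ex (i : Fin 3) : E3 := (Pi.single i 1, 0)

def et : E3 := (0, 1)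

/-- directional derivative in space-time -/
def Dv (v : E3) (F : E3 → ℝ) : E3 → ℝ := fun p => fderiv ℝ F p v

/-- uncurry -/
def sl2 (f : (Fin 3 → ℝ) → ℝ → ℝ) : E3 → ℝ := fun q => f q.1 q.2

lemma diffAt {F : E3 → ℝ} (hF : ContDiff ℝ (⊤ : ℕ∞) F) (p : E3) : DifferentiableAt ℝ F p :=
  (hF.differentiable (by simp)).differentiableAt

lemma Dv_contDiff {F : E3 → ℝ} (hF : ContDiff ℝ (⊤ : ℕ∞) F) (v : E3) : ContDiff ℝ (⊤ : ℕ∞) (Dv v F) := by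
  have h1 : ContDiff ℝ (⊤ : ℕ∞) (fderiv ℝ F) := hF.fderiv_right (by simp)
  exact (ContinuousLinearMap.apply ℝ ℝ v).contDiff.comp h1

lemma Dv_add {F G : E3 → ℝ} {p : E3} (hF : DifferentiableAt ℝ F p)
    (hG : DifferentiableAt ℝ G p) (v : E3) :
    Dv v (fun q => F q + G q) p = Dv v F p + Dv v G p := by
  simp [Dv, fderiv_fun_add hF hG]

lemma Dv_sub {F G : E3 → ℝ} {p : E3} (hF : DifferentiableAt ℝ F p)
    (hG : DifferentiableAt ℝ G p) (v : E3) :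
    Dv v (fun q => F q - G q) p = Dv v F p - Dv v G p := by
  simp [Dv, fderiv_fun_sub hF hG]

lemma Dv_mul {F G : E3 → ℝ} {p : E3} (hF : DifferentiableAt ℝ F p)
    (hG : DifferentiableAt ℝ G p) (v : E3) :
    Dv v (fun q => F q * G q) p = F p * Dv v G p + G p * Dv v F p := by
  simp [Dv, fderiv_fun_mul hF hG]

lemma Dv_const (v : E3) (p : E3) (c : ℝ) : Dv v (fun _ => c) p = 0 := by
  simp [Dv]

lemma Dv_const_mul {F : E3 → ℝ} {p : E3} (hF : DifferentiableAt ℝ F p) (c : ℝ) (v : E3) :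
    Dv v (fun q => c * F q) p = c * Dv v F p := by
  simp [Dv, fderiv_const_mul hF c]

lemma Dv_sum {F : Fin 3 → E3 → ℝ} {p : E3} (h : ∀ i, DifferentiableAt ℝ (F i) p) (v : E3) :
    Dv v (fun q => ∑ i, F i q) p = ∑ i, Dv v (F i) p := by
  simp [Dv, fderiv_fun_sum (fun i _ => h i)]

lemma Dv_comm {F : E3 → ℝ} (hF : ContDiff ℝ (⊤ : ℕ∞) F) (v w : E3) (p : E3) :
    Dv v (Dv w F) p = Dv w (Dv v F) p := by
  have hd : DifferentiableAt ℝ (fderiv ℝ F) p :=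
    ((hF.fderiv_right (m := (⊤ : ℕ∞)) (by simp)).differentiable (by simp)).differentiableAt
  have key : ∀ a b : E3, Dv a (Dv b F) p = fderiv ℝ (fderiv ℝ F) p a b := by
    intro a b
    have h1 : Dv b F = fun q => (fderiv ℝ F q) b := rfl
    rw [Dv, h1, fderiv_clm_apply hd (differentiableAt_const b)]
    simp
  rw [key, key]
  exact (hF.contDiffAt.isSymmSndFDerivAt (by rw [minSmoothness_of_isRCLikeNormedField]; exact WithTop.coe_le_coe.mpr le_top)) v w

lemma Dv_comm_fun {F : E3 → ℝ} (hF : ContDiff ℝ (⊤ : ℕ∞) F) (v w : E3) :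
    Dv v (Dv w F) = Dv w (Dv v F) :=
  funext fun p => Dv_comm hF v w p

lemma pd_slice {F : E3 → ℝ} {x : Fin 3 → ℝ} {t : ℝ} (hF : DifferentiableAt ℝ F (x, t))
    (i : Fin 3) : pd i (fun y => F (y, t)) x = Dv (ex i) F (x, t) := by
  have hg : HasFDerivAt (fun y : Fin 3 → ℝ => ((y, t) : E3))
      ((ContinuousLinearMap.id ℝ (Fin 3 → ℝ)).prod 0) x :=
    (hasFDerivAt_id x).prodMk (hasFDerivAt_const t x)
  have h : HasFDerivAt (fun y => F (y, t))
      ((fderiv ℝ F (x, t)).comp ((ContinuousLinearMap.id ℝ (Fin 3 → ℝ)).prod 0)) x :=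
    (hF.hasFDerivAt).comp x hg
  rw [pd, h.fderiv]
  rfl

lemma deriv_slice {F : E3 → ℝ} {x : Fin 3 → ℝ} {t : ℝ} (hF : DifferentiableAt ℝ F (x, t)) :
    deriv (fun s => F (x, s)) t = Dv et F (x, t) := by
  have hg : HasFDerivAt (fun s : ℝ => ((x, s) : E3))
      ((0 : ℝ →L[ℝ] (Fin 3 → ℝ)).prod (ContinuousLinearMap.id ℝ ℝ)) t :=
    (hasFDerivAt_const x t).prodMk (hasFDerivAt_id t)
  have h : HasFDerivAt (fun s => F (x, s))
      ((fderiv ℝ F (x, t)).comp ((0 : ℝ →L[ℝ] (Fin 3 → ℝ)).prod (ContinuousLinearMap.id ℝ ℝ))) t :=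
    (hF.hasFDerivAt).comp t hg
  rw [h.hasDerivAt.deriv]
  rfl

end NSAux
namespace NSAux

def GamD (ν : ℝ) (u : (Fin 3 → ℝ) → ℝ → Fin 3 → ℝ) (F : E3 → ℝ) : E3 → ℝ :=
  fun p => Dv et F p + (∑ j, u p.1 p.2 j * Dv (ex j) F p)
    - ν * ∑ k, Dv (ex k) (Dv (ex k) F) p

variable {ν : ℝ} {u : (Fin 3 → ℝ) → ℝ → Fin 3 → ℝ}

lemma GamD_contDiff (hu : ContDiff ℝ (⊤ : ℕ∞) (fun p : E3 => u p.1 p.2)) {F : E3 → ℝ}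
    (hF : ContDiff ℝ (⊤ : ℕ∞) F) : ContDiff ℝ (⊤ : ℕ∞) (GamD ν u F) := by
  have hul : ∀ l, ContDiff ℝ (⊤ : ℕ∞) (fun q : E3 => u q.1 q.2 l) := fun l =>
    contDiff_pi.mp hu l
  apply ContDiff.sub
  · exact (Dv_contDiff hF et).add (ContDiff.sum fun j _ => (hul j).mul (Dv_contDiff hF (ex j)))
  · exact contDiff_const.mul (ContDiff.sum fun k _ => Dv_contDiff (Dv_contDiff hF (ex k)) (ex k))

lemma Gam_eq (ν : ℝ) (u : (Fin 3 → ℝ) → ℝ → Fin 3 → ℝ) {F : E3 → ℝ}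
    (hF : ContDiff ℝ (⊤ : ℕ∞) F) (x : Fin 3 → ℝ) (t : ℝ) :
    Gam ν u (fun y s => F (y, s)) x t = GamD ν u F (x, t) := by
  have h1 : ∀ (y : Fin 3 → ℝ) (s : ℝ) (k : Fin 3),
      pd k (fun z => F (z, s)) y = Dv (ex k) F (y, s) := fun y s k => pd_slice (diffAt hF _) k
  have h3 : ∀ k : Fin 3, pd k (fun y => Dv (ex k) F (y, t)) x = Dv (ex k) (Dv (ex k) F) (x, t) :=
    fun k => pd_slice (diffAt (Dv_contDiff hF (ex k)) _) k
  simp only [Gam, lap, GamD]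
  rw [deriv_slice (diffAt hF _)]
  simp only [h1, h3]

lemma GamD_const (p : E3) (c : ℝ) : GamD ν u (fun _ => c) p = 0 := by
  have h1 : Dv et (fun _ : E3 => c) p = 0 := Dv_const et p c
  have h2 : ∀ v : E3, Dv v (fun _ : E3 => c) = fun _ => (0 : ℝ) :=
    fun v => funext fun q => Dv_const v q c
  simp [GamD, h1, h2, Dv_const]

lemma GamD_sum (hu : ContDiff ℝ (⊤ : ℕ∞) (fun p : E3 => u p.1 p.2)) {F : Fin 3 → E3 → ℝ}
    (hF : ∀ j, ContDiff ℝ (⊤ : ℕ∞) (F j)) (p : E3) :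
    GamD ν u (fun q => ∑ j, F j q) p = ∑ j, GamD ν u (F j) p := by
  have hdvfun : ∀ v, Dv v (fun q => ∑ j, F j q) = fun q => ∑ j, Dv v (F j) q :=
    fun v => funext fun q => Dv_sum (fun j => diffAt (hF j) q) v
  have h2 : ∀ v w : E3, Dv v (fun q => ∑ j, Dv w (F j) q) p = ∑ j, Dv v (Dv w (F j)) p :=
    fun v w => Dv_sum (fun j => diffAt (Dv_contDiff (hF j) w) p) v
  simp only [GamD, hdvfun, h2]
  simp only [Fin.sum_univ_three]
  ring

lemma GamD_mul (hu : ContDiff ℝ (⊤ : ℕ∞) (fun p : E3 => u p.1 p.2)) {F G : E3 → ℝ}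
    (hF : ContDiff ℝ (⊤ : ℕ∞) F) (hG : ContDiff ℝ (⊤ : ℕ∞) G) (p : E3) :
    GamD ν u (fun q => F q * G q) p
      = F p * GamD ν u G p + G p * GamD ν u F p
        - 2 * ν * ∑ k, Dv (ex k) F p * Dv (ex k) G p := by
  have hmulfun : ∀ v, Dv v (fun q => F q * G q)
      = fun q => F q * Dv v G q + G q * Dv v F q :=
    fun v => funext fun q => Dv_mul (diffAt hF q) (diffAt hG q) v
  have h2 : ∀ v w : E3, Dv v (fun q => F q * Dv w G q + G q * Dv w F q) p
      = (F p * Dv v (Dv w G) p + Dv w G p * Dv v F p)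
        + (G p * Dv v (Dv w F) p + Dv w F p * Dv v G p) := by
    intro v w
    rw [Dv_add ((diffAt hF p).fun_mul (diffAt (Dv_contDiff hG w) p))
      ((diffAt hG p).fun_mul (diffAt (Dv_contDiff hF w) p)) v,
      Dv_mul (diffAt hF p) (diffAt (Dv_contDiff hG w) p) v,
      Dv_mul (diffAt hG p) (diffAt (Dv_contDiff hF w) p) v]
  simp only [GamD, hmulfun, h2]
  simp only [Fin.sum_univ_three]
  ring

lemma GamD_Dv (hu : ContDiff ℝ (⊤ : ℕ∞) (fun p : E3 => u p.1 p.2)) {F : E3 → ℝ}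
    (hF : ContDiff ℝ (⊤ : ℕ∞) F) (j : Fin 3) (p : E3) :
    GamD ν u (Dv (ex j) F) p
      = Dv (ex j) (GamD ν u F) p
        - ∑ l, Dv (ex j) (fun q : E3 => u q.1 q.2 l) p * Dv (ex l) F p := by
  have hul : ∀ l, ContDiff ℝ (⊤ : ℕ∞) (fun q : E3 => u q.1 q.2 l) := fun l =>
    contDiff_pi.mp hu l
  have hY : ContDiff ℝ (⊤ : ℕ∞) (fun q : E3 => ∑ l, u q.1 q.2 l * Dv (ex l) F q) :=
    ContDiff.sum fun l _ => (hul l).mul (Dv_contDiff hF (ex l))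
  have hZ : ContDiff ℝ (⊤ : ℕ∞) (fun q : E3 => ν * ∑ k, Dv (ex k) (Dv (ex k) F) q) :=
    contDiff_const.mul (ContDiff.sum fun k _ => Dv_contDiff (Dv_contDiff hF (ex k)) (ex k))
  have eY : Dv (ex j) (fun q : E3 => ∑ l, u q.1 q.2 l * Dv (ex l) F q) p
      = ∑ l, (u p.1 p.2 l * Dv (ex j) (Dv (ex l) F) p
          + Dv (ex l) F p * Dv (ex j) (fun q : E3 => u q.1 q.2 l) p) := by
    rw [Dv_sum (fun l => diffAt ((hul l).mul (Dv_contDiff hF (ex l))) p) (ex j)]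
    exact Finset.sum_congr rfl fun l _ =>
      Dv_mul (diffAt (hul l) p) (diffAt (Dv_contDiff hF (ex l)) p) (ex j)
  have eZ : Dv (ex j) (fun q : E3 => ν * ∑ k, Dv (ex k) (Dv (ex k) F) q) p
      = ν * ∑ k, Dv (ex j) (Dv (ex k) (Dv (ex k) F)) p := by
    rw [Dv_const_mul (diffAt (ContDiff.sum fun k _ =>
      Dv_contDiff (Dv_contDiff hF (ex k)) (ex k)) p) ν (ex j),
      Dv_sum (fun k => diffAt (Dv_contDiff (Dv_contDiff hF (ex k)) (ex k)) p) (ex j)]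
  have eW : Dv (ex j) (GamD ν u F) p
      = Dv (ex j) (Dv et F) p
        + (∑ l, (u p.1 p.2 l * Dv (ex j) (Dv (ex l) F) p
            + Dv (ex l) F p * Dv (ex j) (fun q : E3 => u q.1 q.2 l) p))
        - ν * ∑ k, Dv (ex j) (Dv (ex k) (Dv (ex k) F)) p := by
    have : GamD ν u F = fun q => (Dv et F q + ∑ l, u q.1 q.2 l * Dv (ex l) F q)
        - ν * ∑ k, Dv (ex k) (Dv (ex k) F) q := rfl
    rw [this, Dv_sub (((Dv_contDiff hF et).add hY).differentiable (by simp)).differentiableAt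
      (diffAt hZ p) (ex j),
      Dv_add (diffAt (Dv_contDiff hF et) p) (diffAt hY p) (ex j), eY, eZ]
  have c1 : Dv et (Dv (ex j) F) p = Dv (ex j) (Dv et F) p := Dv_comm hF et (ex j) p
  have c2 : ∀ l : Fin 3, Dv (ex l) (Dv (ex j) F) p = Dv (ex j) (Dv (ex l) F) p :=
    fun l => Dv_comm hF (ex l) (ex j) p
  have c3 : ∀ k : Fin 3, Dv (ex k) (Dv (ex k) (Dv (ex j) F)) p
      = Dv (ex j) (Dv (ex k) (Dv (ex k) F)) p := by
    intro k
    rw [Dv_comm_fun hF (ex k) (ex j)]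
    exact Dv_comm (Dv_contDiff hF (ex k)) (ex k) (ex j) p
  simp only [GamD, c1, c2, c3, eW]
  simp only [Fin.sum_univ_three]
  ring

end NSAux
namespace NSAux

set_option maxHeartbeats 1000000 in
lemma key_scalar (q : Fin 3 → Fin 3 → ℝ) (T : Fin 3 → Fin 3 → Fin 3 → ℝ)
    (G : Fin 3 → ℝ) (Hg : Fin 3 → Fin 3 → ℝ)
    (hT : ∀ k j m, T k j m = T j k m)
    (dq : Fin 3 → Fin 3 → Fin 3 → ℝ)
    (hdq : ∀ k l i, dq k l i = -∑ j, ∑ p, q j i * T k j p * q l p) (i : Fin 3) :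
    (∑ j, ∑ l, ∑ k, ∑ b, G j * dq k l i * T k l b * q j b) - (∑ j, ∑ k, dq k j i * Hg k j)
      = ∑ m, ∑ k, (∑ j, q j i * T j k m) * (∑ j, (dq k j m * G j + q j m * Hg k j)) := by
  simp only [hdq, Fin.sum_univ_three]
  simp only [hT 1 0, hT 2 0, hT 2 1]
  ring

lemma delta_collapse (f : Fin 3 → ℝ) (l : Fin 3) :
    (∑ j, f j * (if j = l then (1:ℝ) else 0)) = f l := by
  simp [mul_ite, Finset.sum_ite_eq']

lemma collapse (DA q : Fin 3 → Fin 3 → ℝ)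
    (h2 : ∀ m b, (∑ j, DA m j * q b j) = if m = b then (1:ℝ) else 0)
    (v : Fin 3 → ℝ) (w : Fin 3 → ℝ) (h : ∀ b, (∑ j, DA j b * v j) = w b) (l : Fin 3) :
    v l = ∑ b, w b * q l b := by
  calc v l = ∑ j, v j * (if j = l then (1:ℝ) else 0) := (delta_collapse v l).symm
    _ = ∑ j, v j * (∑ b, DA j b * q l b) :=
        Finset.sum_congr rfl fun j _ => by rw [h2 j l]
    _ = ∑ b, (∑ j, DA j b * v j) * q l b := by
        simp only [Fin.sum_univ_three]; ring
    _ = ∑ b, w b * q l b := Finset.sum_congr rfl fun b _ => by rw [h b]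

end NSAux
open NSAux in
set_option maxHeartbeats 2000000 in
/-- The commutation relation `[Γ, ∇_A^i] g = 2ν C_{m,k;i} ∂_k (∇_A^m g)`
holds for every smooth `g`, provided `ΓA = 0` and `Q = (∇A)⁻¹` evolves by
`ΓQ = (∇u)Q + 2ν Q ∂_k(∇A) ∂_k Q`. -/
theorem Gam_nablaA_commutator (ν : ℝ) (hν : 0 < ν)
    (u : (Fin 3 → ℝ) → ℝ → Fin 3 → ℝ)
    (hu : ContDiff ℝ (⊤ : ℕ∞) (fun p : (Fin 3 → ℝ) × ℝ => u p.1 p.2))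
    (hdiv : ∀ (x : Fin 3 → ℝ) (t : ℝ), ∑ j, pd j (fun y => u y t j) x = 0)
    (A : (Fin 3 → ℝ) → ℝ → Fin 3 → ℝ)
    (hA : ContDiff ℝ (⊤ : ℕ∞) (fun p : (Fin 3 → ℝ) × ℝ => A p.1 p.2))
    (hAeq : ∀ (x : Fin 3 → ℝ) (t : ℝ) (m : Fin 3),
      Gam ν u (fun y s => A y s m) x t = 0)
    (Q : (Fin 3 → ℝ) → ℝ → Fin 3 → Fin 3 → ℝ)
    (hQ : ContDiff ℝ (⊤ : ℕ∞) (fun p : (Fin 3 → ℝ) × ℝ => Q p.1 p.2))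
    (hQ1 : ∀ (x : Fin 3 → ℝ) (t : ℝ) (m p : Fin 3),
      ∑ j, Q x t j m * pd j (fun y => A y t p) x = if m = p then (1:ℝ) else 0)
    (hQ2 : ∀ (x : Fin 3 → ℝ) (t : ℝ) (m p : Fin 3),
      ∑ j, pd m (fun y => A y t j) x * Q x t p j = if m = p then (1:ℝ) else 0)
    (hQeq : ∀ (x : Fin 3 → ℝ) (t : ℝ) (j i : Fin 3),
      Gam ν u (fun y s => Q y s j i) x t
        = (∑ k, pd k (fun y => u y t j) x * Q x t k i)
          + 2 * ν * ∑ k, ∑ a, ∑ b,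
              Q x t j a * pd k (fun y => pd a (fun z => A z t b) y) x
                * pd k (fun y => Q y t b i) x)
    (g : (Fin 3 → ℝ) → ℝ → ℝ)
    (hg : ContDiff ℝ (⊤ : ℕ∞) (fun p : (Fin 3 → ℝ) × ℝ => g p.1 p.2)) :
    ∀ (x : Fin 3 → ℝ) (t : ℝ) (i : Fin 3),
      Gam ν u (fun y s => ∑ j, Q y s j i * pd j (fun z => g z s) y) x t
        - ∑ j, Q x t j i * pd j (fun y => Gam ν u g y t) x =
      2 * ν * ∑ m, ∑ k,
        (∑ j, Q x t j i * pd j (fun y => pd k (fun z => A z t m) y) x)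
          * pd k (fun y => ∑ j, Q y t j m * pd j (fun z => g z t) y) x := by
  intro x t i
  -- smoothness of the uncurried building blocks
  have hFg : ContDiff ℝ (⊤ : ℕ∞) (sl2 g) := hg
  have hFA : ∀ m, ContDiff ℝ (⊤ : ℕ∞) (sl2 (fun y s => A y s m)) := fun m => contDiff_pi.mp hA m
  have hFu : ∀ l, ContDiff ℝ (⊤ : ℕ∞) (fun q : E3 => u q.1 q.2 l) := fun l => contDiff_pi.mp hu l
  have hFQ : ∀ j m, ContDiff ℝ (⊤ : ℕ∞) (sl2 (fun y s => Q y s j m)) := fun j m =>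
    contDiff_pi.mp (contDiff_pi.mp hQ j) m
  have hPhi : ∀ m, ContDiff ℝ (⊤ : ℕ∞)
      (fun q : E3 => ∑ j, sl2 (fun y s => Q y s j m) q * Dv (ex j) (sl2 g) q) := fun m =>
    ContDiff.sum fun j _ => (hFQ j m).mul (Dv_contDiff hFg (ex j))
  -- pd translations
  have hpdg : ∀ (y : Fin 3 → ℝ) (s : ℝ) (j : Fin 3),
      pd j (fun z => g z s) y = Dv (ex j) (sl2 g) (y, s) := fun y s j =>
    pd_slice (diffAt hFg _) j
  have hpdA : ∀ (y : Fin 3 → ℝ) (s : ℝ) (k m : Fin 3),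
      pd k (fun z => A z s m) y = Dv (ex k) (sl2 (fun y' s' => A y' s' m)) (y, s) :=
    fun y s k m => pd_slice (diffAt (hFA m) _) k
  -- rewrite the goal into Dv form
  have hfun1 : ∀ m : Fin 3,
      (fun (y : Fin 3 → ℝ) (s : ℝ) => ∑ j, Q y s j m * pd j (fun z => g z s) y)
        = fun y s => (fun q : E3 => ∑ j, sl2 (fun y' s' => Q y' s' j m) q
            * Dv (ex j) (sl2 g) q) (y, s) := by
    intro m; funext y s
    simp only
    exact Finset.sum_congr rfl fun j _ => by rw [hpdg y s j]; rfl
  have hGamg_fun : (fun y => Gam ν u g y t) = fun y => GamD ν u (sl2 g) (y, t) :=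
    funext fun y => Gam_eq ν u hFg y t
  have h2' : ∀ j : Fin 3, pd j (fun y => Gam ν u g y t) x
      = Dv (ex j) (GamD ν u (sl2 g)) (x, t) := by
    intro j; rw [hGamg_fun]; exact pd_slice (diffAt (GamD_contDiff hu hFg) _) j
  have h3' : ∀ j k m', pd j (fun y => pd k (fun z => A z t m') y) x
      = Dv (ex j) (Dv (ex k) (sl2 (fun y' s' => A y' s' m'))) (x, t) := by
    intro j k m'
    have e : (fun y => pd k (fun z => A z t m') y)
        = fun y => Dv (ex k) (sl2 (fun y' s' => A y' s' m')) (y, t) :=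
      funext fun y => hpdA y t k m'
    rw [e]; exact pd_slice (diffAt (Dv_contDiff (hFA m') (ex k)) _) j
  have h4' : ∀ k m', pd k (fun y => ∑ j, Q y t j m' * pd j (fun z => g z t) y) x
      = Dv (ex k) (fun q : E3 => ∑ j, sl2 (fun y' s' => Q y' s' j m') q
          * Dv (ex j) (sl2 g) q) (x, t) := by
    intro k m'
    have e : (fun y => ∑ j, Q y t j m' * pd j (fun z => g z t) y)
        = fun y => (fun q : E3 => ∑ j, sl2 (fun y' s' => Q y' s' j m') q
            * Dv (ex j) (sl2 g) q) (y, t) := by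
      funext y; simp only
      exact Finset.sum_congr rfl fun j _ => by rw [hpdg y t j]; rfl
    rw [e]; exact pd_slice (diffAt (hPhi m') _) k
  rw [hfun1 i, Gam_eq ν u (hPhi i) x t]
  simp only [h2', h3', h4']
  -- translated inverse relations
  have hq1p : ∀ (y : Fin 3 → ℝ) (s : ℝ) (m b : Fin 3),
      (∑ j, sl2 (fun y' s' => Q y' s' j m) (y, s)
        * Dv (ex j) (sl2 (fun y' s' => A y' s' b)) (y, s)) = if m = b then (1:ℝ) else 0 := by
    intro y s m b
    rw [← hQ1 y s m b]
    exact Finset.sum_congr rfl fun j _ => by rw [hpdA y s j b]; rfl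
  have hq1fun : ∀ m b, (fun q : E3 => ∑ j, sl2 (fun y' s' => Q y' s' j m) q
      * Dv (ex j) (sl2 (fun y' s' => A y' s' b)) q) = fun _ => if m = b then (1:ℝ) else 0 := by
    intro m b; funext q
    obtain ⟨y, s⟩ := q
    exact hq1p y s m b
  have hq2p : ∀ m b : Fin 3,
      (∑ j, Dv (ex m) (sl2 (fun y' s' => A y' s' j)) (x, t) * Q x t b j)
        = if m = b then (1:ℝ) else 0 := by
    intro m b
    rw [← hQ2 x t m b]
    exact Finset.sum_congr rfl fun j _ => by rw [hpdA x t m j]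
  -- Γ A = 0 in GamD form
  have hGamA : ∀ m, GamD ν u (sl2 (fun y' s' => A y' s' m)) = fun _ => (0:ℝ) := by
    intro m; funext q
    obtain ⟨y, s⟩ := q
    rw [← Gam_eq ν u (hFA m) y s]
    exact hAeq y s m
  -- spatial derivatives of Q : the identity I3
  have hdq0 : ∀ (k m b : Fin 3),
      (∑ j, (Q x t j m * Dv (ex k) (Dv (ex j) (sl2 (fun y' s' => A y' s' b))) (x, t)
        + Dv (ex j) (sl2 (fun y' s' => A y' s' b)) (x, t)
          * Dv (ex k) (sl2 (fun y' s' => Q y' s' j m)) (x, t))) = 0 := by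
    intro k m b
    have e0 : Dv (ex k) (fun q : E3 => ∑ j, sl2 (fun y' s' => Q y' s' j m) q
        * Dv (ex j) (sl2 (fun y' s' => A y' s' b)) q) (x, t) = 0 := by
      rw [hq1fun m b]; exact Dv_const _ _ _
    rw [← e0,
      Dv_sum (fun j => ((diffAt (hFQ j m) _).fun_mul (diffAt (Dv_contDiff (hFA b) (ex j)) _))) (ex k)]
    refine Finset.sum_congr rfl fun j _ => ?_
    rw [Dv_mul (diffAt (hFQ j m) _) (diffAt (Dv_contDiff (hFA b) (ex j)) _) (ex k)]
    rfl
  -- explicit formula for the spatial derivatives of Q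
  have hdqA : ∀ k l m, Dv (ex k) (sl2 (fun y' s' => Q y' s' l m)) (x, t)
      = -∑ j, ∑ b, Q x t j m * Dv (ex k) (Dv (ex j) (sl2 (fun y' s' => A y' s' b))) (x, t)
          * Q x t l b := by
    intro k l m
    have h := collapse (fun a b => Dv (ex a) (sl2 (fun y' s' => A y' s' b)) (x, t))
      (fun a b => Q x t a b) (fun a b => hq2p a b)
      (fun j => Dv (ex k) (sl2 (fun y' s' => Q y' s' j m)) (x, t))
      (fun b => -∑ j, Q x t j m * Dv (ex k) (Dv (ex j) (sl2 (fun y' s' => A y' s' b))) (x, t))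
      (fun b => by
        have h0 := hdq0 k m b
        simp only [Fin.sum_univ_three] at h0 ⊢
        linarith) l
    rw [h]
    simp only [Fin.sum_univ_three]
    ring
  -- Γ of ∇A in GamD form
  have hGamDvA : ∀ j b, GamD ν u (Dv (ex j) (sl2 (fun y' s' => A y' s' b))) (x, t)
      = -∑ l, Dv (ex j) (fun q : E3 => u q.1 q.2 l) (x, t)
          * Dv (ex l) (sl2 (fun y' s' => A y' s' b)) (x, t) := by
    intro j b
    rw [GamD_Dv hu (hFA b) j (x, t),
      show Dv (ex j) (GamD ν u (sl2 (fun y' s' => A y' s' b))) (x, t) = 0 from by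
        rw [hGamA b]; exact Dv_const _ _ _]
    ring
  -- the relation determining Γ Q
  have hrel : ∀ m b : Fin 3,
      (∑ j, Dv (ex j) (sl2 (fun y' s' => A y' s' b)) (x, t)
        * GamD ν u (sl2 (fun y' s' => Q y' s' j m)) (x, t))
      = (∑ j, Q x t j m * (∑ l, Dv (ex j) (fun q : E3 => u q.1 q.2 l) (x, t)
            * Dv (ex l) (sl2 (fun y' s' => A y' s' b)) (x, t)))
        + 2 * ν * ∑ j, ∑ k, Dv (ex k) (sl2 (fun y' s' => Q y' s' j m)) (x, t)
            * Dv (ex k) (Dv (ex j) (sl2 (fun y' s' => A y' s' b))) (x, t) := by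
    intro m b
    have e1 : GamD ν u (fun q : E3 => ∑ j, sl2 (fun y' s' => Q y' s' j m) q
        * Dv (ex j) (sl2 (fun y' s' => A y' s' b)) q) (x, t) = 0 := by
      rw [hq1fun m b]; exact GamD_const _ _
    rw [GamD_sum hu (fun j => (hFQ j m).mul (Dv_contDiff (hFA b) (ex j))) (x, t)] at e1
    have e2 : ∀ j : Fin 3, GamD ν u (fun q : E3 => sl2 (fun y' s' => Q y' s' j m) q
        * Dv (ex j) (sl2 (fun y' s' => A y' s' b)) q) (x, t)
        = sl2 (fun y' s' => Q y' s' j m) (x, t)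
            * GamD ν u (Dv (ex j) (sl2 (fun y' s' => A y' s' b))) (x, t)
          + Dv (ex j) (sl2 (fun y' s' => A y' s' b)) (x, t)
            * GamD ν u (sl2 (fun y' s' => Q y' s' j m)) (x, t)
          - 2 * ν * ∑ k, Dv (ex k) (sl2 (fun y' s' => Q y' s' j m)) (x, t)
              * Dv (ex k) (Dv (ex j) (sl2 (fun y' s' => A y' s' b))) (x, t) :=
      fun j => GamD_mul hu (hFQ j m) (Dv_contDiff (hFA b) (ex j)) (x, t)
    have hsl2Q : ∀ j m', sl2 (fun y' s' => Q y' s' j m') (x, t) = Q x t j m' := fun _ _ => rfl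
    simp only [e2, hGamDvA, hsl2Q] at e1
    simp only [Fin.sum_univ_three] at e1 ⊢
    linear_combination e1
  -- explicit formula for Γ Q
  have hgqA : ∀ l m, GamD ν u (sl2 (fun y' s' => Q y' s' l m)) (x, t)
      = ∑ b, ((∑ j, Q x t j m * (∑ a, Dv (ex j) (fun q : E3 => u q.1 q.2 a) (x, t)
            * Dv (ex a) (sl2 (fun y' s' => A y' s' b)) (x, t)))
          + 2 * ν * ∑ j, ∑ k, Dv (ex k) (sl2 (fun y' s' => Q y' s' j m)) (x, t)
              * Dv (ex k) (Dv (ex j) (sl2 (fun y' s' => A y' s' b))) (x, t)) * Q x t l b := by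
    intro l m
    exact collapse (fun a b => Dv (ex a) (sl2 (fun y' s' => A y' s' b)) (x, t))
      (fun a b => Q x t a b) (fun a b => hq2p a b)
      (fun j => GamD ν u (sl2 (fun y' s' => Q y' s' j m)) (x, t)) _
      (fun b => hrel m b) l
  have hgq' : ∀ l m, GamD ν u (sl2 (fun y' s' => Q y' s' l m)) (x, t)
      = (∑ j, Q x t j m * Dv (ex j) (fun q : E3 => u q.1 q.2 l) (x, t))
        + 2 * ν * ∑ b, (∑ j, ∑ k, Dv (ex k) (sl2 (fun y' s' => Q y' s' j m)) (x, t)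
            * Dv (ex k) (Dv (ex j) (sl2 (fun y' s' => A y' s' b))) (x, t)) * Q x t l b := by
    intro l m
    rw [hgqA l m]
    have inter : (∑ b, ((∑ j, Q x t j m * (∑ a, Dv (ex j) (fun q : E3 => u q.1 q.2 a) (x, t)
            * Dv (ex a) (sl2 (fun y' s' => A y' s' b)) (x, t)))
          + 2 * ν * ∑ j, ∑ k, Dv (ex k) (sl2 (fun y' s' => Q y' s' j m)) (x, t)
              * Dv (ex k) (Dv (ex j) (sl2 (fun y' s' => A y' s' b))) (x, t)) * Q x t l b)
        = (∑ j, Q x t j m * (∑ a, Dv (ex j) (fun q : E3 => u q.1 q.2 a) (x, t)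
            * (∑ b, Dv (ex a) (sl2 (fun y' s' => A y' s' b)) (x, t) * Q x t l b)))
          + 2 * ν * ∑ b, (∑ j, ∑ k, Dv (ex k) (sl2 (fun y' s' => Q y' s' j m)) (x, t)
              * Dv (ex k) (Dv (ex j) (sl2 (fun y' s' => A y' s' b))) (x, t)) * Q x t l b := by
      simp only [Fin.sum_univ_three]; ring
    rw [inter]
    simp only [hq2p]
    simp only [delta_collapse]
  -- expand the Γ of the compound function
  rw [GamD_sum hu (fun j => (hFQ j i).mul (Dv_contDiff hFg (ex j))) (x, t)]
  have E2 : ∀ j m, GamD ν u (fun q : E3 => sl2 (fun y' s' => Q y' s' j m) q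
      * Dv (ex j) (sl2 g) q) (x, t)
      = sl2 (fun y' s' => Q y' s' j m) (x, t) * GamD ν u (Dv (ex j) (sl2 g)) (x, t)
        + Dv (ex j) (sl2 g) (x, t) * GamD ν u (sl2 (fun y' s' => Q y' s' j m)) (x, t)
        - 2 * ν * ∑ k, Dv (ex k) (sl2 (fun y' s' => Q y' s' j m)) (x, t)
            * Dv (ex k) (Dv (ex j) (sl2 g)) (x, t) :=
    fun j m => GamD_mul hu (hFQ j m) (Dv_contDiff hFg (ex j)) (x, t)
  have EG3 : ∀ j : Fin 3, GamD ν u (Dv (ex j) (sl2 g)) (x, t)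
      = Dv (ex j) (GamD ν u (sl2 g)) (x, t)
        - ∑ l, Dv (ex j) (fun q : E3 => u q.1 q.2 l) (x, t) * Dv (ex l) (sl2 g) (x, t) :=
    fun j => GamD_Dv hu hFg j (x, t)
  have E5 : ∀ k m, Dv (ex k) (fun q : E3 => ∑ j, sl2 (fun y' s' => Q y' s' j m) q
      * Dv (ex j) (sl2 g) q) (x, t)
      = ∑ j, (Q x t j m * Dv (ex k) (Dv (ex j) (sl2 g)) (x, t)
          + Dv (ex j) (sl2 g) (x, t) * Dv (ex k) (sl2 (fun y' s' => Q y' s' j m)) (x, t)) := by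
    intro k m
    rw [Dv_sum (fun j => (diffAt (hFQ j m) _).fun_mul (diffAt (Dv_contDiff hFg (ex j)) _)) (ex k)]
    refine Finset.sum_congr rfl fun j _ => ?_
    rw [Dv_mul (diffAt (hFQ j m) _) (diffAt (Dv_contDiff hFg (ex j)) _) (ex k)]
    rfl
  have hsl2Q : ∀ j m, sl2 (fun y' s' => Q y' s' j m) (x, t) = Q x t j m := fun _ _ => rfl
  simp only [E2, EG3, E5, hsl2Q, hgq']
  have final := key_scalar (fun j m => Q x t j m)
    (fun k j m => Dv (ex k) (Dv (ex j) (sl2 (fun y' s' => A y' s' m))) (x, t))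
    (fun j => Dv (ex j) (sl2 g) (x, t))
    (fun k j => Dv (ex k) (Dv (ex j) (sl2 g)) (x, t))
    (fun k j m => Dv_comm (hFA m) (ex k) (ex j) (x, t))
    (fun k j m => Dv (ex k) (sl2 (fun y' s' => Q y' s' j m)) (x, t))
    hdqA i
  simp only [Fin.sum_univ_three] at final ⊢
  linear_combination (2 * ν) * final
end
end

section
/- If u = ∇_x(A^m) v_m − ∇n (i.e. u_i = (∂_i A^m) v_m − ∂_i n), the displacement satisfies D_t ℓ − νΔℓ + u = 0 (equivalently ΓA = 0), and v satisfies Γv_i = 2ν C_{m,k;i} ∂_k v_m + Q_{ji} f_j, then u solves the Navier-Stokes momentum equation ∂_t u + u·∇u − νΔu + ∇p = f with p = Γn + |u|²/2 + c for any constant c. -/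
open scoped BigOperators

noncomputable section

namespace NSaux

abbrev EE : Type := (Fin 3 → ℝ) × ℝ

/-- Directional derivative in direction `w` on the product space. -/
def dP (w : EE) (F : EE → ℝ) (p : EE) : ℝ := fderiv ℝ F p w

def eV (i : Fin 3) : EE := (Pi.single i 1, 0)
def eT : EE := ((0 : Fin 3 → ℝ), 1)

theorem dP_smooth (w : EE) {F : EE → ℝ} (hF : ContDiff ℝ (⊤ : ℕ∞) F) : ContDiff ℝ (⊤ : ℕ∞) (dP w F) :=
  (hF.fderiv_right (by simp)).clm_apply contDiff_const

theorem dP_add {F G : EE → ℝ} {p : EE} (hF : DifferentiableAt ℝ F p)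
    (hG : DifferentiableAt ℝ G p) (w : EE) :
    dP w (fun q => F q + G q) p = dP w F p + dP w G p := by
  simp [dP, fderiv_fun_add hF hG]

theorem dP_const (w : EE) (c : ℝ) (p : EE) : dP w (fun _ => c) p = 0 := by
  simp [dP]

theorem dP_sub {F G : EE → ℝ} {p : EE} (hF : DifferentiableAt ℝ F p)
    (hG : DifferentiableAt ℝ G p) (w : EE) :
    dP w (fun q => F q - G q) p = dP w F p - dP w G p := by
  simp [dP, fderiv_fun_sub hF hG]

theorem dP_mul {F G : EE → ℝ} {p : EE} (hF : DifferentiableAt ℝ F p)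
    (hG : DifferentiableAt ℝ G p) (w : EE) :
    dP w (fun q => F q * G q) p = F p * dP w G p + G p * dP w F p := by
  simp [dP, fderiv_fun_mul hF hG]

theorem dP_sum {ι : Type*} {s : Finset ι} {F : ι → EE → ℝ} {p : EE}
    (hF : ∀ i ∈ s, DifferentiableAt ℝ (F i) p) (w : EE) :
    dP w (fun q => ∑ i ∈ s, F i q) p = ∑ i ∈ s, dP w (F i) p := by
  simp [dP, fderiv_fun_sum hF]

theorem dP_div_const {F : EE → ℝ} {p : EE} (hF : DifferentiableAt ℝ F p) (w : EE) (c : ℝ) :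
    dP w (fun q => F q / c) p = dP w F p / c := by
  simp [dP, div_eq_mul_inv, fderiv_mul_const hF, mul_comm]

theorem dP_clm {F : EE → ℝ} (hF : ContDiff ℝ (⊤ : ℕ∞) F) (w w' : EE) (p : EE) :
    dP w' (dP w F) p = fderiv ℝ (fderiv ℝ F) p w' w := by
  unfold dP
  rw [fderiv_clm_apply ((hF.fderiv_right (m := (⊤ : ℕ∞)) (by simp)).differentiable (by simp) p)
    (differentiableAt_const w)]
  simp

theorem dP_comm {F : EE → ℝ} (hF : ContDiff ℝ (⊤ : ℕ∞) F) (w w' : EE) (p : EE) :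
    dP w (dP w' F) p = dP w' (dP w F) p := by
  rw [dP_clm hF, dP_clm hF]
  exact (hF.contDiffAt.isSymmSndFDerivAt (by rw [minSmoothness_of_isRCLikeNormedField]; exact WithTop.coe_le_coe.mpr (le_top : (2 : ℕ∞) ≤ ⊤))) w w'

theorem pd_eq {F : EE → ℝ} (hF : ContDiff ℝ (⊤ : ℕ∞) F) (i : Fin 3) (x : Fin 3 → ℝ) (t : ℝ) :
    pd i (fun y => F (y, t)) x = dP (eV i) F (x, t) := by
  have h1 : HasFDerivAt (fun y : Fin 3 → ℝ => (y, t))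
      ((ContinuousLinearMap.id ℝ (Fin 3 → ℝ)).prod 0) x :=
    HasFDerivAt.prodMk (hasFDerivAt_id x) (hasFDerivAt_const t x)
  have h2 : HasFDerivAt F (fderiv ℝ F (x, t)) (x, t) :=
    ((hF.differentiable (by simp)) (x, t)).hasFDerivAt
  have h3 : HasFDerivAt (fun y => F (y, t))
      ((fderiv ℝ F (x, t)).comp ((ContinuousLinearMap.id ℝ (Fin 3 → ℝ)).prod 0)) x :=
    h2.comp x h1
  unfold pd dP eV
  rw [h3.fderiv]
  simp

theorem deriv_eq {F : EE → ℝ} (hF : ContDiff ℝ (⊤ : ℕ∞) F) (x : Fin 3 → ℝ) (t : ℝ) :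
    deriv (fun s => F (x, s)) t = dP eT F (x, t) := by
  have h1 : HasFDerivAt (fun s : ℝ => (x, s))
      ((0 : ℝ →L[ℝ] (Fin 3 → ℝ)).prod (ContinuousLinearMap.id ℝ ℝ)) t :=
    HasFDerivAt.prodMk (hasFDerivAt_const x t) (hasFDerivAt_id t)
  have h2 : HasFDerivAt F (fderiv ℝ F (x, t)) (x, t) :=
    ((hF.differentiable (by simp)) (x, t)).hasFDerivAt
  have h3 : HasFDerivAt (fun s => F (x, s))
      ((fderiv ℝ F (x, t)).comp ((0 : ℝ →L[ℝ] (Fin 3 → ℝ)).prod (ContinuousLinearMap.id ℝ ℝ))) t :=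
    h2.comp t h1
  rw [← fderiv_apply_one_eq_deriv, h3.fderiv]
  unfold dP eT
  simp

theorem pd_pd_eq {F : EE → ℝ} (hF : ContDiff ℝ (⊤ : ℕ∞) F) (i k : Fin 3) (x : Fin 3 → ℝ) (t : ℝ) :
    pd i (fun y => pd k (fun z => F (z, t)) y) x = dP (eV i) (dP (eV k) F) (x, t) := by
  have : (fun y => pd k (fun z => F (z, t)) y) = fun y => dP (eV k) F (y, t) := by
    funext y; exact pd_eq hF k y t
  rw [this, pd_eq (dP_smooth (eV k) hF)]

theorem lap_eq {F : EE → ℝ} (hF : ContDiff ℝ (⊤ : ℕ∞) F) (x : Fin 3 → ℝ) (t : ℝ) :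
    lap (fun y => F (y, t)) x = ∑ k, dP (eV k) (dP (eV k) F) (x, t) := by
  unfold lap
  exact Finset.sum_congr rfl fun k _ => pd_pd_eq hF k k x t

/-- The operator `Γ` in product-space language. -/
def GamP (ν : ℝ) (U : Fin 3 → EE → ℝ) (G : EE → ℝ) (p : EE) : ℝ :=
  dP eT G p + ∑ j, U j p * dP (eV j) G p - ν * ∑ j, dP (eV j) (dP (eV j) G) p

theorem Gam_eq (ν : ℝ) (u : (Fin 3 → ℝ) → ℝ → Fin 3 → ℝ) {F : EE → ℝ}
    (hF : ContDiff ℝ (⊤ : ℕ∞) F) (x : Fin 3 → ℝ) (t : ℝ) :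
    Gam ν u (fun y s => F (y, s)) x t
      = GamP ν (fun j p => u p.1 p.2 j) F (x, t) := by
  unfold Gam GamP
  rw [deriv_eq hF, lap_eq hF]
  congr 1
  · congr 1
    exact Finset.sum_congr rfl fun j _ => by rw [pd_eq hF]

theorem dP_const_mul {F : EE → ℝ} {p : EE} (hF : DifferentiableAt ℝ F p) (c : ℝ) (w : EE) :
    dP w (fun q => c * F q) p = c * dP w F p := by
  simp [dP, fderiv_const_mul hF]

/-- differentiability helper -/
theorem sdiff {F : EE → ℝ} (hF : ContDiff ℝ (⊤ : ℕ∞) F) (p : EE) : DifferentiableAt ℝ F p :=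
  (hF.differentiable (by simp)) p

theorem GamP_smooth {ν : ℝ} {U : Fin 3 → EE → ℝ} (hU : ∀ j, ContDiff ℝ (⊤ : ℕ∞) (U j))
    {G : EE → ℝ} (hG : ContDiff ℝ (⊤ : ℕ∞) G) : ContDiff ℝ (⊤ : ℕ∞) (GamP ν U G) := by
  unfold GamP
  exact ((dP_smooth eT hG).add (ContDiff.sum fun j _ => (hU j).mul (dP_smooth (eV j) hG))).sub
    (contDiff_const.mul (ContDiff.sum fun j _ => dP_smooth (eV j) (dP_smooth (eV j) hG)))

theorem GamP_add {ν : ℝ} {U : Fin 3 → EE → ℝ} {F G : EE → ℝ}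
    (hF : ContDiff ℝ (⊤ : ℕ∞) F) (hG : ContDiff ℝ (⊤ : ℕ∞) G) (p : EE) :
    GamP ν U (fun q => F q + G q) p = GamP ν U F p + GamP ν U G p := by
  unfold GamP
  have h2 : ∀ w : EE, (fun q => dP w (fun r => F r + G r) q) = fun q => dP w F q + dP w G q :=
    fun w => funext fun q => dP_add (sdiff hF q) (sdiff hG q) w
  rw [dP_add (sdiff hF p) (sdiff hG p)]
  have h3 : ∀ j : Fin 3, dP (eV j) (dP (eV j) (fun r => F r + G r)) p
      = dP (eV j) (dP (eV j) F) p + dP (eV j) (dP (eV j) G) p := by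
    intro j
    have : dP (eV j) (fun r => F r + G r) = fun q => dP (eV j) F q + dP (eV j) G q := h2 (eV j)
    rw [this, dP_add (sdiff (dP_smooth (eV j) hF) p) (sdiff (dP_smooth (eV j) hG) p)]
  have h4 : ∀ j : Fin 3, dP (eV j) (fun r => F r + G r) p = dP (eV j) F p + dP (eV j) G p :=
    fun j => dP_add (sdiff hF p) (sdiff hG p) (eV j)
  simp only [h3, h4, mul_add]
  simp only [Finset.sum_add_distrib]
  ring

theorem GamP_sub {ν : ℝ} {U : Fin 3 → EE → ℝ} {F G : EE → ℝ}
    (hF : ContDiff ℝ (⊤ : ℕ∞) F) (hG : ContDiff ℝ (⊤ : ℕ∞) G) (p : EE) :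
    GamP ν U (fun q => F q - G q) p = GamP ν U F p - GamP ν U G p := by
  unfold GamP
  have h2 : ∀ w : EE, (fun q => dP w (fun r => F r - G r) q) = fun q => dP w F q - dP w G q :=
    fun w => funext fun q => dP_sub (sdiff hF q) (sdiff hG q) w
  rw [dP_sub (sdiff hF p) (sdiff hG p)]
  have h3 : ∀ j : Fin 3, dP (eV j) (dP (eV j) (fun r => F r - G r)) p
      = dP (eV j) (dP (eV j) F) p - dP (eV j) (dP (eV j) G) p := by
    intro j
    have : dP (eV j) (fun r => F r - G r) = fun q => dP (eV j) F q - dP (eV j) G q := h2 (eV j)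
    rw [this, dP_sub (sdiff (dP_smooth (eV j) hF) p) (sdiff (dP_smooth (eV j) hG) p)]
  have h4 : ∀ j : Fin 3, dP (eV j) (fun r => F r - G r) p = dP (eV j) F p - dP (eV j) G p :=
    fun j => dP_sub (sdiff hF p) (sdiff hG p) (eV j)
  simp only [h3, h4, mul_sub]
  simp only [Finset.sum_sub_distrib]
  ring

theorem GamP_sum {ν : ℝ} {U : Fin 3 → EE → ℝ} {ι : Type*} (s : Finset ι) {F : ι → EE → ℝ}
    (hF : ∀ i, ContDiff ℝ (⊤ : ℕ∞) (F i)) (p : EE) :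
    GamP ν U (fun q => ∑ i ∈ s, F i q) p = ∑ i ∈ s, GamP ν U (F i) p := by
  classical
  induction s using Finset.induction_on with
  | empty =>
      simp only [Finset.sum_empty]
      unfold GamP
      have hz : ∀ w : EE, dP w (fun _ : EE => (0:ℝ)) = fun _ : EE => (0:ℝ) :=
        fun w => funext fun q => dP_const w 0 q
      simp only [hz, dP_const]
      simp
  | @insert a s hnot ih =>
      have hs : (fun q => ∑ i ∈ insert a s, F i q)
          = fun q => F a q + ∑ i ∈ s, F i q := by
        funext q; exact Finset.sum_insert hnot
      rw [hs, GamP_add (hF a) (ContDiff.sum fun i _ => hF i), ih, Finset.sum_insert hnot]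

theorem GamP_mul {ν : ℝ} {U : Fin 3 → EE → ℝ} {F G : EE → ℝ}
    (hF : ContDiff ℝ (⊤ : ℕ∞) F) (hG : ContDiff ℝ (⊤ : ℕ∞) G) (p : EE) :
    GamP ν U (fun q => F q * G q) p
      = F p * GamP ν U G p + G p * GamP ν U F p
        - 2 * ν * ∑ k, dP (eV k) F p * dP (eV k) G p := by
  have h1 : ∀ w : EE, dP w (fun r => F r * G r) p = F p * dP w G p + G p * dP w F p :=
    fun w => dP_mul (sdiff hF p) (sdiff hG p) w
  have h2 : ∀ j : Fin 3, dP (eV j) (dP (eV j) fun r => F r * G r) p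
      = F p * dP (eV j) (dP (eV j) G) p + G p * dP (eV j) (dP (eV j) F) p
        + 2 * (dP (eV j) F p * dP (eV j) G p) := by
    intro j
    have e : dP (eV j) (fun r => F r * G r)
        = fun q => F q * dP (eV j) G q + G q * dP (eV j) F q :=
      funext fun q => dP_mul (sdiff hF q) (sdiff hG q) (eV j)
    rw [e, dP_add (F := fun q => F q * dP (eV j) G q) (G := fun q => G q * dP (eV j) F q) ((sdiff hF p).mul (sdiff (dP_smooth (eV j) hG) p))
        ((sdiff hG p).mul (sdiff (dP_smooth (eV j) hF) p)),
      dP_mul (sdiff hF p) (sdiff (dP_smooth (eV j) hG) p),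
      dP_mul (sdiff hG p) (sdiff (dP_smooth (eV j) hF) p)]
    ring
  unfold GamP
  simp only [h1, h2, mul_add]
  simp only [Finset.sum_add_distrib]
  have e1 : ∑ j, U j p * (F p * dP (eV j) G p) = F p * ∑ j, U j p * dP (eV j) G p := by
    rw [Finset.mul_sum]; exact Finset.sum_congr rfl fun j _ => by ring
  have e2 : ∑ j, U j p * (G p * dP (eV j) F p) = G p * ∑ j, U j p * dP (eV j) F p := by
    rw [Finset.mul_sum]; exact Finset.sum_congr rfl fun j _ => by ring
  have e3 : ∑ j, F p * dP (eV j) (dP (eV j) G) p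
      = F p * ∑ j, dP (eV j) (dP (eV j) G) p := (Finset.mul_sum _ _ _).symm
  have e4 : ∑ j, G p * dP (eV j) (dP (eV j) F) p
      = G p * ∑ j, dP (eV j) (dP (eV j) F) p := (Finset.mul_sum _ _ _).symm
  have e5 : ∑ j : Fin 3, 2 * (dP (eV j) F p * dP (eV j) G p)
      = 2 * ∑ j, dP (eV j) F p * dP (eV j) G p := (Finset.mul_sum _ _ _).symm
  rw [e1, e2, e3, e4, e5]
  ring

theorem GamP_dP {ν : ℝ} {U : Fin 3 → EE → ℝ} (hU : ∀ j, ContDiff ℝ (⊤ : ℕ∞) (U j))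
    {G : EE → ℝ} (hG : ContDiff ℝ (⊤ : ℕ∞) G) (i : Fin 3) (p : EE) :
    GamP ν U (dP (eV i) G) p
      = dP (eV i) (GamP ν U G) p - ∑ j, dP (eV i) (U j) p * dP (eV j) G p := by
  have hA : ContDiff ℝ (⊤ : ℕ∞) (fun q => ∑ j, U j q * dP (eV j) G q) :=
    ContDiff.sum fun j _ => (hU j).mul (dP_smooth (eV j) hG)
  have hS : ContDiff ℝ (⊤ : ℕ∞) (fun q => ∑ j, dP (eV j) (dP (eV j) G) q) :=
    ContDiff.sum fun j _ => dP_smooth (eV j) (dP_smooth (eV j) hG)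
  -- expand the right-hand side derivative of GamP
  have hrhs : dP (eV i) (GamP ν U G) p
      = dP (eV i) (dP eT G) p
        + ∑ j, (U j p * dP (eV i) (dP (eV j) G) p + dP (eV j) G p * dP (eV i) (U j) p)
        - ν * ∑ j, dP (eV i) (dP (eV j) (dP (eV j) G)) p := by
    calc dP (eV i) (GamP ν U G) p
        = dP (eV i) (fun q => (dP eT G q + ∑ j, U j q * dP (eV j) G q)
            - ν * ∑ j, dP (eV j) (dP (eV j) G) q) p := rfl
      _ = dP (eV i) (fun q => dP eT G q + ∑ j, U j q * dP (eV j) G q) p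
          - dP (eV i) (fun q => ν * ∑ j, dP (eV j) (dP (eV j) G) q) p :=
          dP_sub ((sdiff (dP_smooth eT hG) p).add (sdiff hA p))
            ((differentiableAt_const ν).mul (sdiff hS p)) (eV i)
      _ = dP (eV i) (dP eT G) p + dP (eV i) (fun q => ∑ j, U j q * dP (eV j) G q) p
          - ν * dP (eV i) (fun q => ∑ j, dP (eV j) (dP (eV j) G) q) p := by
          rw [dP_add (sdiff (dP_smooth eT hG) p) (sdiff hA p), dP_const_mul (sdiff hS p)]
      _ = dP (eV i) (dP eT G) p
          + ∑ j, (U j p * dP (eV i) (dP (eV j) G) p + dP (eV j) G p * dP (eV i) (U j) p)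
          - ν * ∑ j, dP (eV i) (dP (eV j) (dP (eV j) G)) p := by
          rw [dP_sum (F := fun j q => U j q * dP (eV j) G q) (fun j _ => (sdiff (hU j) p).mul (sdiff (dP_smooth (eV j) hG) p)),
            dP_sum (fun j _ => sdiff (dP_smooth (eV j) (dP_smooth (eV j) hG)) p)]
          congr 1
          congr 1
          exact Finset.sum_congr rfl fun j _ =>
            dP_mul (sdiff (hU j) p) (sdiff (dP_smooth (eV j) hG) p) (eV i)
  -- expand the left-hand side using commutation of derivatives
  have hlhs : GamP ν U (dP (eV i) G) p
      = dP (eV i) (dP eT G) p + ∑ j, U j p * dP (eV i) (dP (eV j) G) p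
        - ν * ∑ j, dP (eV i) (dP (eV j) (dP (eV j) G)) p := by
    unfold GamP
    congr 1
    · congr 1
      · exact dP_comm hG eT (eV i) p
      · exact Finset.sum_congr rfl fun j _ => by rw [dP_comm hG (eV j) (eV i) p]
    · congr 1
      refine Finset.sum_congr rfl fun j _ => ?_
      have e : dP (eV j) (dP (eV i) G) = dP (eV i) (dP (eV j) G) :=
        funext fun q => dP_comm hG (eV j) (eV i) q
      rw [e, dP_comm (dP_smooth (eV j) hG) (eV j) (eV i) p]
  rw [hlhs, hrhs]
  simp only [Finset.sum_add_distrib]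
  have e6 : ∑ j, dP (eV j) G p * dP (eV i) (U j) p
      = ∑ j, dP (eV i) (U j) p * dP (eV j) G p :=
    Finset.sum_congr rfl fun j _ => mul_comm _ _
  rw [e6]
  ring

def Uc (g : (Fin 3 → ℝ) → ℝ → Fin 3 → ℝ) (j : Fin 3) : EE → ℝ := fun p => g p.1 p.2 j
def Nc (g : (Fin 3 → ℝ) → ℝ → ℝ) : EE → ℝ := fun p => g p.1 p.2
def Qc (g : (Fin 3 → ℝ) → ℝ → Fin 3 → Fin 3 → ℝ) (j m : Fin 3) : EE → ℝ := fun p => g p.1 p.2 j m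

theorem Uc_smooth {g : (Fin 3 → ℝ) → ℝ → Fin 3 → ℝ}
    (hg : ContDiff ℝ (⊤ : ℕ∞) (fun p : EE => g p.1 p.2)) (j : Fin 3) : ContDiff ℝ (⊤ : ℕ∞) (Uc g j) := by
  have P : (Fin 3 → ℝ) →L[ℝ] ℝ := ContinuousLinearMap.proj j
  exact (ContinuousLinearMap.proj (R := ℝ) (φ := fun _ : Fin 3 => ℝ) j).contDiff.comp hg

theorem Qc_smooth {g : (Fin 3 → ℝ) → ℝ → Fin 3 → Fin 3 → ℝ}
    (hg : ContDiff ℝ (⊤ : ℕ∞) (fun p : EE => g p.1 p.2)) (j m : Fin 3) : ContDiff ℝ (⊤ : ℕ∞) (Qc g j m) := by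
  exact (((ContinuousLinearMap.proj (R := ℝ) (φ := fun _ : Fin 3 => ℝ) m)).comp
    (ContinuousLinearMap.proj (R := ℝ) (φ := fun _ : Fin 3 => Fin 3 → ℝ) j)).contDiff.comp hg

theorem dP_coord (m : Fin 3) (w p : EE) : dP w (fun q : EE => q.1 m) p = w.1 m := by
  have h : HasFDerivAt (fun q : EE => q.1 m)
      ((ContinuousLinearMap.proj m).comp (ContinuousLinearMap.fst ℝ (Fin 3 → ℝ) ℝ)) p :=
    ((ContinuousLinearMap.proj m).comp (ContinuousLinearMap.fst ℝ (Fin 3 → ℝ) ℝ)).hasFDerivAt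
  unfold dP
  rw [h.fderiv]
  rfl

theorem coord_smooth (m : Fin 3) : ContDiff ℝ (⊤ : ℕ∞) (fun q : EE => q.1 m) :=
  ((ContinuousLinearMap.proj m).comp (ContinuousLinearMap.fst ℝ (Fin 3 → ℝ) ℝ)).contDiff

theorem GamP_coord (ν : ℝ) (U : Fin 3 → EE → ℝ) (m : Fin 3) (p : EE) :
    GamP ν U (fun q : EE => q.1 m) p = U m p := by
  unfold GamP
  have h1 : ∀ w : EE, dP w (fun q : EE => q.1 m) = fun _ : EE => w.1 m :=
    fun w => funext fun q => dP_coord m w q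
  have h2 : ∀ j : Fin 3, dP (eV j) (dP (eV j) fun q : EE => q.1 m) p = 0 := by
    intro j; rw [h1 (eV j)]; exact dP_const (eV j) _ p
  simp only [h2, dP_coord]
  simp [eT, eV, Pi.single_apply]

theorem dP_sq {F : EE → ℝ} {p : EE} (hF : DifferentiableAt ℝ F p) (w : EE) :
    dP w (fun q => F q ^ 2) p = 2 * F p * dP w F p := by
  have e : (fun q => F q ^ 2) = fun q => F q * F q := funext fun q => by ring
  rw [e, dP_mul hF hF]
  ring

end NSaux

open NSaux

/-- If `u_i = (∂_i A_m) v_m − ∂_i n` with `A = x + ℓ`,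
`Γℓ + u = 0` (equivalently `ΓA = 0`), and `Γv_i = 2ν C_{m,k;i} ∂_k v_m + Q_{ji} f_j`,
then `u` solves `∂_t u + u·∇u − νΔu + ∇p = f` with `p = Γn + |u|²/2 + c`. -/
theorem eulerian_lagrangian_gives_navier_stokes (ν : ℝ) (hν : 0 < ν)
    (u v f : (Fin 3 → ℝ) → ℝ → Fin 3 → ℝ)
    (ℓ : (Fin 3 → ℝ) → ℝ → Fin 3 → ℝ)
    (nn : (Fin 3 → ℝ) → ℝ → ℝ)
    (A : (Fin 3 → ℝ) → ℝ → Fin 3 → ℝ)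
    (hu : ContDiff ℝ (⊤ : ℕ∞) (fun p : (Fin 3 → ℝ) × ℝ => u p.1 p.2))
    (hv : ContDiff ℝ (⊤ : ℕ∞) (fun p : (Fin 3 → ℝ) × ℝ => v p.1 p.2))
    (hf : ContDiff ℝ (⊤ : ℕ∞) (fun p : (Fin 3 → ℝ) × ℝ => f p.1 p.2))
    (hn : ContDiff ℝ (⊤ : ℕ∞) (fun p : (Fin 3 → ℝ) × ℝ => nn p.1 p.2))
    (hℓ : ContDiff ℝ (⊤ : ℕ∞) (fun p : (Fin 3 → ℝ) × ℝ => ℓ p.1 p.2))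
    (hAdef : ∀ (x : Fin 3 → ℝ) (t : ℝ) (i : Fin 3), A x t i = x i + ℓ x t i)
    (hℓeq : ∀ (x : Fin 3 → ℝ) (t : ℝ) (i : Fin 3),
      Gam ν u (fun y s => ℓ y s i) x t + u x t i = 0)
    (Q : (Fin 3 → ℝ) → ℝ → Fin 3 → Fin 3 → ℝ)
    (hQ : ContDiff ℝ (⊤ : ℕ∞) (fun p : (Fin 3 → ℝ) × ℝ => Q p.1 p.2))
    (hQ1 : ∀ (x : Fin 3 → ℝ) (t : ℝ) (m p : Fin 3),
      ∑ j, Q x t j m * pd j (fun y => A y t p) x = if m = p then (1:ℝ) else 0)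
    (hQ2 : ∀ (x : Fin 3 → ℝ) (t : ℝ) (m p : Fin 3),
      ∑ j, pd m (fun y => A y t j) x * Q x t p j = if m = p then (1:ℝ) else 0)
    (huform : ∀ (x : Fin 3 → ℝ) (t : ℝ) (i : Fin 3),
      u x t i = (∑ m, pd i (fun y => A y t m) x * v x t m) - pd i (fun y => nn y t) x)
    (hveq : ∀ (x : Fin 3 → ℝ) (t : ℝ) (i : Fin 3),
      Gam ν u (fun y s => v y s i) x t =
        2 * ν * (∑ m, ∑ k,
            (∑ j, Q x t j i * pd j (fun y => pd k (fun z => A z t m) y) x)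
              * pd k (fun y => v y t m) x)
          + ∑ j, Q x t j i * f x t j) :
    ∀ (c : ℝ) (x : Fin 3 → ℝ) (t : ℝ) (i : Fin 3),
      deriv (fun s => u x s i) t
        + (∑ j, u x t j * pd j (fun y => u y t i) x)
        - ν * lap (fun y => u y t i) x
        + pd i (fun y => Gam ν u nn y t + (∑ j, u y t j ^ 2) / 2 + c) x
      = f x t i := by
  intro c x t i
  -- smoothness of all components
  have hUs : ∀ j, ContDiff ℝ (⊤ : ℕ∞) (Uc u j) := Uc_smooth hu
  have hVs : ∀ j, ContDiff ℝ (⊤ : ℕ∞) (Uc v j) := Uc_smooth hv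
  have hFs : ∀ j, ContDiff ℝ (⊤ : ℕ∞) (Uc f j) := Uc_smooth hf
  have hLs : ∀ j, ContDiff ℝ (⊤ : ℕ∞) (Uc ℓ j) := Uc_smooth hℓ
  have hNs : ContDiff ℝ (⊤ : ℕ∞) (Nc nn) := hn
  have hQs : ∀ j m, ContDiff ℝ (⊤ : ℕ∞) (Qc Q j m) := Qc_smooth hQ
  have hAe : ∀ m, Uc A m = fun q : EE => q.1 m + Uc ℓ m q :=
    fun m => funext fun q => hAdef q.1 q.2 m
  have hAs : ∀ m, ContDiff ℝ (⊤ : ℕ∞) (Uc A m) := by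
    intro m; rw [hAe m]; exact (coord_smooth m).add (hLs m)
  -- hypotheses in product-space language
  have hlP : ∀ (m : Fin 3) (p : EE), GamP ν (Uc u) (Uc ℓ m) p = -(Uc u m p) := by
    intro m p
    have h0 := hℓeq p.1 p.2 m
    have h1 : Gam ν u (fun y s => ℓ y s m) p.1 p.2 = GamP ν (Uc u) (Uc ℓ m) p :=
      Gam_eq ν u (hLs m) p.1 p.2
    rw [h1] at h0
    show GamP ν (Uc u) (Uc ℓ m) p = -(u p.1 p.2 m)
    linarith [h0]
  have hAP : ∀ (m : Fin 3) (p : EE), GamP ν (Uc u) (Uc A m) p = 0 := by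
    intro m p
    calc GamP ν (Uc u) (Uc A m) p
        = GamP ν (Uc u) (fun q : EE => q.1 m + Uc ℓ m q) p := by rw [hAe m]
      _ = GamP ν (Uc u) (fun q : EE => q.1 m) p + GamP ν (Uc u) (Uc ℓ m) p :=
          GamP_add (coord_smooth m) (hLs m) p
      _ = Uc u m p + -(Uc u m p) := by rw [GamP_coord, hlP m p]
      _ = 0 := by ring
  have hQ2P : ∀ (p : EE) (m q : Fin 3),
      ∑ j, dP (eV m) (Uc A j) p * Qc Q q j p = if m = q then (1:ℝ) else 0 := by
    intro p m q
    calc ∑ j, dP (eV m) (Uc A j) p * Qc Q q j p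
        = ∑ j, pd m (fun y => A y p.2 j) p.1 * Q p.1 p.2 q j :=
          Finset.sum_congr rfl fun j _ =>
            congrArg₂ (· * ·) (pd_eq (hAs j) m p.1 p.2).symm rfl
      _ = _ := hQ2 p.1 p.2 m q
  have huP : ∀ (p : EE) (j : Fin 3),
      Uc u j p = (∑ m, dP (eV j) (Uc A m) p * Uc v m p) - dP (eV j) (Nc nn) p := by
    intro p j
    calc Uc u j p
        = (∑ m, pd j (fun y => A y p.2 m) p.1 * v p.1 p.2 m)
            - pd j (fun y => nn y p.2) p.1 := huform p.1 p.2 j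
      _ = _ := by
          congr 1
          · exact Finset.sum_congr rfl fun m _ =>
              congrArg₂ (· * ·) (pd_eq (hAs m) j p.1 p.2) rfl
          · exact pd_eq hNs j p.1 p.2
  have hvP : ∀ (p : EE) (i' : Fin 3), GamP ν (Uc u) (Uc v i') p
      = 2 * ν * (∑ m, ∑ k,
          (∑ j, Qc Q j i' p * dP (eV j) (dP (eV k) (Uc A m)) p) * dP (eV k) (Uc v m) p)
        + ∑ j, Qc Q j i' p * Uc f j p := by
    intro p i'
    have h0 := hveq p.1 p.2 i'
    have h1 : Gam ν u (fun y s => v y s i') p.1 p.2 = GamP ν (Uc u) (Uc v i') p :=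
      Gam_eq ν u (hVs i') p.1 p.2
    rw [h1] at h0
    rw [h0]
    congr 1
    · congr 1
      refine Finset.sum_congr rfl fun m _ => Finset.sum_congr rfl fun k _ => ?_
      exact congrArg₂ (· * ·)
        (Finset.sum_congr rfl fun j _ =>
          congrArg₂ (· * ·) rfl (pd_pd_eq (hAs m) j k p.1 p.2))
        (pd_eq (hVs m) k p.1 p.2)
  -- the key computation
  have hkey : ∀ p : EE, GamP ν (Uc u) (Uc u i) p
      = Uc f i p - dP (eV i) (GamP ν (Uc u) (Nc nn)) p
        - ∑ j, dP (eV i) (Uc u j) p * Uc u j p := by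
    intro p
    have hue : Uc u i
        = fun q => (∑ m, dP (eV i) (Uc A m) q * Uc v m q) - dP (eV i) (Nc nn) q :=
      funext fun q => huP q i
    have hms : ∀ m : Fin 3, ContDiff ℝ (⊤ : ℕ∞) (fun q => dP (eV i) (Uc A m) q * Uc v m q) :=
      fun m => (dP_smooth (eV i) (hAs m)).mul (hVs m)
    have hsum_s : ContDiff ℝ (⊤ : ℕ∞) (fun q => ∑ m, dP (eV i) (Uc A m) q * Uc v m q) :=
      ContDiff.sum fun m _ => hms m
    have e_mul : ∀ m : Fin 3, GamP ν (Uc u) (fun q => dP (eV i) (Uc A m) q * Uc v m q) p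
        = dP (eV i) (Uc A m) p * GamP ν (Uc u) (Uc v m) p
          + Uc v m p * GamP ν (Uc u) (dP (eV i) (Uc A m)) p
          - 2 * ν * ∑ k, dP (eV k) (dP (eV i) (Uc A m)) p * dP (eV k) (Uc v m) p :=
      fun m => GamP_mul (dP_smooth (eV i) (hAs m)) (hVs m) p
    have e_commA : ∀ m : Fin 3, GamP ν (Uc u) (dP (eV i) (Uc A m)) p
        = -∑ j, dP (eV i) (Uc u j) p * dP (eV j) (Uc A m) p := by
      intro m
      have h := GamP_dP (ν := ν) hUs (hAs m) i p
      have hz : GamP ν (Uc u) (Uc A m) = fun _ : EE => (0:ℝ) := funext fun q => hAP m q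
      rw [h, hz, dP_const]
      ring
    have e_commN : GamP ν (Uc u) (dP (eV i) (Nc nn)) p
        = dP (eV i) (GamP ν (Uc u) (Nc nn)) p
          - ∑ j, dP (eV i) (Uc u j) p * dP (eV j) (Nc nn) p := GamP_dP hUs hNs i p
    have hcontr : ∀ X : Fin 3 → ℝ,
        ∑ m, dP (eV i) (Uc A m) p * (∑ j, Qc Q j m p * X j) = X i := by
      intro X
      have h1 : ∀ m : Fin 3, dP (eV i) (Uc A m) p * (∑ j, Qc Q j m p * X j)
          = ∑ j, dP (eV i) (Uc A m) p * Qc Q j m p * X j := by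
        intro m
        rw [Finset.mul_sum]
        exact Finset.sum_congr rfl fun j _ => by ring
      simp only [h1]
      rw [Finset.sum_comm]
      have h2 : ∀ j : Fin 3, (∑ m, dP (eV i) (Uc A m) p * Qc Q j m p * X j)
          = (if i = j then (1:ℝ) else 0) * X j := by
        intro j
        rw [← Finset.sum_mul, hQ2P p i j]
      simp only [h2]
      simp
    have hbig : ∑ m, dP (eV i) (Uc A m) p * (∑ m', ∑ k,
          (∑ j, Qc Q j m p * dP (eV j) (dP (eV k) (Uc A m')) p) * dP (eV k) (Uc v m') p)
        = ∑ m', ∑ k, dP (eV i) (dP (eV k) (Uc A m')) p * dP (eV k) (Uc v m') p := by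
      have h1 : ∀ m : Fin 3, dP (eV i) (Uc A m) p * (∑ m', ∑ k,
            (∑ j, Qc Q j m p * dP (eV j) (dP (eV k) (Uc A m')) p) * dP (eV k) (Uc v m') p)
          = ∑ m', ∑ k, dP (eV i) (Uc A m) p *
              ((∑ j, Qc Q j m p * dP (eV j) (dP (eV k) (Uc A m')) p)
                * dP (eV k) (Uc v m') p) := by
        intro m
        rw [Finset.mul_sum]
        exact Finset.sum_congr rfl fun m' _ => Finset.mul_sum _ _ _
      simp only [h1]
      rw [Finset.sum_comm]
      refine Finset.sum_congr rfl fun m' _ => ?_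
      rw [Finset.sum_comm]
      refine Finset.sum_congr rfl fun k _ => ?_
      have h2 : ∀ m : Fin 3, dP (eV i) (Uc A m) p *
            ((∑ j, Qc Q j m p * dP (eV j) (dP (eV k) (Uc A m')) p) * dP (eV k) (Uc v m') p)
          = dP (eV i) (Uc A m) p * (∑ j, Qc Q j m p * dP (eV j) (dP (eV k) (Uc A m')) p)
              * dP (eV k) (Uc v m') p := fun m => by ring
      simp only [h2]
      rw [← Finset.sum_mul]
      exact congrArg (· * dP (eV k) (Uc v m') p)
        (hcontr fun j => dP (eV j) (dP (eV k) (Uc A m')) p)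
    have hcommk : ∀ m : Fin 3, ∑ k, dP (eV k) (dP (eV i) (Uc A m)) p * dP (eV k) (Uc v m) p
        = ∑ k, dP (eV i) (dP (eV k) (Uc A m)) p * dP (eV k) (Uc v m) p :=
      fun m => Finset.sum_congr rfl fun k _ => by rw [dP_comm (hAs m) (eV k) (eV i) p]
    have hstep : GamP ν (Uc u) (Uc u i) p
        = (∑ m, (dP (eV i) (Uc A m) p * GamP ν (Uc u) (Uc v m) p
            + Uc v m p * GamP ν (Uc u) (dP (eV i) (Uc A m)) p
            - 2 * ν * ∑ k, dP (eV k) (dP (eV i) (Uc A m)) p * dP (eV k) (Uc v m) p))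
          - GamP ν (Uc u) (dP (eV i) (Nc nn)) p := by
      calc GamP ν (Uc u) (Uc u i) p
          = GamP ν (Uc u) (fun q => (∑ m, dP (eV i) (Uc A m) q * Uc v m q)
              - dP (eV i) (Nc nn) q) p := by rw [hue]
        _ = GamP ν (Uc u) (fun q => ∑ m, dP (eV i) (Uc A m) q * Uc v m q) p
            - GamP ν (Uc u) (dP (eV i) (Nc nn)) p :=
            GamP_sub hsum_s (dP_smooth (eV i) hNs) p
        _ = (∑ m, GamP ν (Uc u) (fun q => dP (eV i) (Uc A m) q * Uc v m q) p)
            - GamP ν (Uc u) (dP (eV i) (Nc nn)) p :=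
            congrArg₂ (· - ·) (GamP_sum Finset.univ (fun m => hms m) p) rfl
        _ = _ := congrArg₂ (· - ·) (Finset.sum_congr rfl fun m _ => e_mul m) rfl
    rw [hstep, e_commN]
    simp only [hvP, e_commA, hcommk]
    rw [Finset.sum_sub_distrib, Finset.sum_add_distrib]
    have P1 : ∑ m, dP (eV i) (Uc A m) p *
          (2 * ν * (∑ m', ∑ k,
            (∑ j, Qc Q j m p * dP (eV j) (dP (eV k) (Uc A m')) p) * dP (eV k) (Uc v m') p)
           + ∑ j, Qc Q j m p * Uc f j p)
        = 2 * ν * (∑ m, dP (eV i) (Uc A m) p * (∑ m', ∑ k,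
            (∑ j, Qc Q j m p * dP (eV j) (dP (eV k) (Uc A m')) p) * dP (eV k) (Uc v m') p))
          + ∑ m, dP (eV i) (Uc A m) p * (∑ j, Qc Q j m p * Uc f j p) := by
      rw [Finset.mul_sum, ← Finset.sum_add_distrib]
      exact Finset.sum_congr rfl fun m _ => by ring
    have hcontrF : ∑ m, dP (eV i) (Uc A m) p * (∑ j, Qc Q j m p * Uc f j p) = Uc f i p :=
      hcontr fun j => Uc f j p
    have P2 : ∑ m, Uc v m p * -(∑ j, dP (eV i) (Uc u j) p * dP (eV j) (Uc A m) p)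
        = -∑ j, dP (eV i) (Uc u j) p * ∑ m, dP (eV j) (Uc A m) p * Uc v m p := by
      have h1 : ∀ m : Fin 3, Uc v m p * -(∑ j, dP (eV i) (Uc u j) p * dP (eV j) (Uc A m) p)
          = -(∑ j, dP (eV i) (Uc u j) p * (dP (eV j) (Uc A m) p * Uc v m p)) := by
        intro m
        rw [mul_neg, mul_comm, Finset.sum_mul]
        congr 1
        exact Finset.sum_congr rfl fun j _ => by ring
      simp only [h1]
      rw [Finset.sum_neg_distrib]
      exact congrArg Neg.neg (Finset.sum_comm.trans
        (Finset.sum_congr rfl fun j _ => (Finset.mul_sum _ _ _).symm))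
    have P3 : ∑ m : Fin 3, 2 * ν *
          (∑ k, dP (eV i) (dP (eV k) (Uc A m)) p * dP (eV k) (Uc v m) p)
        = 2 * ν * (∑ m, ∑ k, dP (eV i) (dP (eV k) (Uc A m)) p * dP (eV k) (Uc v m) p) :=
      (Finset.mul_sum _ _ _).symm
    have PU : ∑ j, dP (eV i) (Uc u j) p * Uc u j p
        = (∑ j, dP (eV i) (Uc u j) p * ∑ m, dP (eV j) (Uc A m) p * Uc v m p)
          - ∑ j, dP (eV i) (Uc u j) p * dP (eV j) (Nc nn) p := by
      rw [← Finset.sum_sub_distrib]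
      exact Finset.sum_congr rfl fun j _ => by rw [huP p j]; ring
    rw [P1, hbig, hcontrF, P2, P3, PU]
    ring
  -- rewrite the goal
  show Gam ν u (fun y s => u y s i) x t
      + pd i (fun y => Gam ν u nn y t + (∑ j, u y t j ^ 2) / 2 + c) x = f x t i
  have hg1 : Gam ν u (fun y s => u y s i) x t = GamP ν (Uc u) (Uc u i) (x, t) :=
    Gam_eq ν u (hUs i) x t
  have hPFs : ContDiff ℝ (⊤ : ℕ∞) (fun q : EE =>
      GamP ν (Uc u) (Nc nn) q + (∑ j, Uc u j q ^ 2) / 2 + c) :=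
    ((GamP_smooth hUs hNs).add
      ((ContDiff.sum fun j _ => (hUs j).pow 2).div_const 2)).add contDiff_const
  have hg2 : pd i (fun y => Gam ν u nn y t + (∑ j, u y t j ^ 2) / 2 + c) x
      = dP (eV i) (fun q : EE =>
          GamP ν (Uc u) (Nc nn) q + (∑ j, Uc u j q ^ 2) / 2 + c) (x, t) := by
    have e : (fun y => Gam ν u nn y t + (∑ j, u y t j ^ 2) / 2 + c)
        = fun y => (fun q : EE =>
            GamP ν (Uc u) (Nc nn) q + (∑ j, Uc u j q ^ 2) / 2 + c) (y, t) := by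
      funext y
      have h : Gam ν u nn y t = GamP ν (Uc u) (Nc nn) (y, t) := Gam_eq ν u hNs y t
      rw [h]
      rfl
    rw [e]
    exact pd_eq hPFs i x t
  rw [hg1, hg2]
  -- expand the pressure gradient
  have hGNs : ContDiff ℝ (⊤ : ℕ∞) (GamP ν (Uc u) (Nc nn)) := GamP_smooth hUs hNs
  have hsqs : ContDiff ℝ (⊤ : ℕ∞) (fun q : EE => (∑ j, Uc u j q ^ 2) / 2) :=
    (ContDiff.sum fun j _ => (hUs j).pow 2).div_const 2
  have hg3 : dP (eV i) (fun q : EE =>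
        GamP ν (Uc u) (Nc nn) q + (∑ j, Uc u j q ^ 2) / 2 + c) (x, t)
      = dP (eV i) (GamP ν (Uc u) (Nc nn)) (x, t)
        + ∑ j, Uc u j (x, t) * dP (eV i) (Uc u j) (x, t) := by
    calc dP (eV i) (fun q : EE =>
          GamP ν (Uc u) (Nc nn) q + (∑ j, Uc u j q ^ 2) / 2 + c) (x, t)
        = dP (eV i) (fun q : EE =>
            GamP ν (Uc u) (Nc nn) q + (∑ j, Uc u j q ^ 2) / 2) (x, t)
          + dP (eV i) (fun _ : EE => c) (x, t) :=
          dP_add ((sdiff hGNs (x, t)).add (sdiff hsqs (x, t)))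
            (differentiableAt_const c) (eV i)
      _ = dP (eV i) (GamP ν (Uc u) (Nc nn)) (x, t)
          + dP (eV i) (fun q : EE => (∑ j, Uc u j q ^ 2) / 2) (x, t) + 0 := by
          rw [dP_add (sdiff hGNs (x, t)) (sdiff hsqs (x, t)), dP_const]
      _ = dP (eV i) (GamP ν (Uc u) (Nc nn)) (x, t)
          + (∑ j, 2 * Uc u j (x, t) * dP (eV i) (Uc u j) (x, t)) / 2 + 0 := by
          rw [dP_div_const (F := fun q => ∑ j, Uc u j q ^ 2) (DifferentiableAt.fun_sum fun j _ => (sdiff (hUs j) (x, t)).pow 2) (eV i) 2,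
            dP_sum (F := fun j q => Uc u j q ^ 2) (fun j _ => (sdiff (hUs j) (x, t)).pow 2)]
          have e5 : (∑ j : Fin 3, dP (eV i) (fun q => Uc u j q ^ 2) (x, t))
              = ∑ j : Fin 3, 2 * Uc u j (x, t) * dP (eV i) (Uc u j) (x, t) :=
            Finset.sum_congr rfl fun j _ => dP_sq (sdiff (hUs j) (x, t)) (eV i)
          rw [e5]
      _ = dP (eV i) (GamP ν (Uc u) (Nc nn)) (x, t)
          + ∑ j, Uc u j (x, t) * dP (eV i) (Uc u j) (x, t) := by
          rw [Finset.sum_div]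
          have : ∀ j : Fin 3, 2 * Uc u j (x, t) * dP (eV i) (Uc u j) (x, t) / 2
              = Uc u j (x, t) * dP (eV i) (Uc u j) (x, t) := fun j => by ring
          simp only [this]
          ring
  rw [hg3, hkey (x, t)]
  show Uc f i (x, t) - dP (eV i) (GamP ν (Uc u) (Nc nn)) (x, t)
      - (∑ j, dP (eV i) (Uc u j) (x, t) * Uc u j (x, t))
      + (dP (eV i) (GamP ν (Uc u) (Nc nn)) (x, t)
        + ∑ j, Uc u j (x, t) * dP (eV i) (Uc u j) (x, t)) = Uc f i (x, t)
  have e6 : ∑ j, Uc u j (x, t) * dP (eV i) (Uc u j) (x, t)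
      = ∑ j, dP (eV i) (Uc u j) (x, t) * Uc u j (x, t) :=
    Finset.sum_congr rfl fun j _ => mul_comm _ _
  rw [e6]
  ring
end
end

section
/- If ℓ solves Γℓ + u = 0 and v solves Γv_i = 2ν C_{m,k;i}∂_k v_m + Q_{ji}f_j, then w defined by w_i = (∂_i A^m) v_m solves the cotangent equation Γw + (∇u)^* w = f, i.e. Γw_i + (∂_i u_j) w_j = f_i. -/
open scoped BigOperators

noncomputable section

namespace CotAux

abbrev E3 : Type := Fin 3 → ℝ
abbrev P3 : Type := E3 × ℝ

def ej (i : Fin 3) : P3 := (Pi.single i 1, 0)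
def tau : P3 := (0, 1)

/-- Directional derivative of a scalar function on space-time. -/
def Dv (w : P3) (F : P3 → ℝ) (p : P3) : ℝ := fderiv ℝ F p w

/-- Component of a time-dependent vector field as a function on space-time. -/
def cmp (g : (Fin 3 → ℝ) → ℝ → Fin 3 → ℝ) (j : Fin 3) : P3 → ℝ :=
  fun p => g p.1 p.2 j

def cmp2 (g : (Fin 3 → ℝ) → ℝ → Fin 3 → Fin 3 → ℝ) (j m : Fin 3) : P3 → ℝ :=
  fun p => g p.1 p.2 j m

def Afun (ℓ : (Fin 3 → ℝ) → ℝ → Fin 3 → ℝ) (m : Fin 3) : P3 → ℝ :=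
  fun q => q.1 m + cmp ℓ m q

/-- Space-time version of the operator `Γ`. -/
def GD (ν : ℝ) (U : Fin 3 → P3 → ℝ) (F : P3 → ℝ) (p : P3) : ℝ :=
  Dv tau F p + ∑ j, U j p * Dv (ej j) F p - ν * ∑ j, Dv (ej j) (Dv (ej j) F) p

lemma Dv_contDiff {F : P3 → ℝ} (hF : ContDiff ℝ (⊤ : ℕ∞) F) (w : P3) :
    ContDiff ℝ (⊤ : ℕ∞) (Dv w F) :=
  (hF.fderiv_right (by simp)).clm_apply contDiff_const

lemma Dv_add {F G : P3 → ℝ} (hF : Differentiable ℝ F) (hG : Differentiable ℝ G)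
    (w : P3) (p : P3) :
    Dv w (fun q => F q + G q) p = Dv w F p + Dv w G p := by
  simp [Dv, fderiv_fun_add (hF p) (hG p)]

lemma Dv_sub {F G : P3 → ℝ} (hF : Differentiable ℝ F) (hG : Differentiable ℝ G)
    (w : P3) (p : P3) :
    Dv w (fun q => F q - G q) p = Dv w F p - Dv w G p := by
  simp [Dv, fderiv_fun_sub (hF p) (hG p)]

lemma Dv_const_mul {F : P3 → ℝ} (hF : Differentiable ℝ F) (c : ℝ)
    (w : P3) (p : P3) :
    Dv w (fun q => c * F q) p = c * Dv w F p := by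
  simp [Dv, fderiv_const_mul (hF p) c]

lemma Dv_mul {F G : P3 → ℝ} (hF : Differentiable ℝ F) (hG : Differentiable ℝ G)
    (w : P3) (p : P3) :
    Dv w (fun q => F q * G q) p = Dv w F p * G p + F p * Dv w G p := by
  simp [Dv, fderiv_fun_mul (hF p) (hG p)]
  ring

lemma Dv_const (c : ℝ) (w : P3) (p : P3) : Dv w (fun _ => c) p = 0 := by
  simp [Dv]

lemma Dv_sum {ι : Type*} (s : Finset ι) (F : ι → P3 → ℝ)
    (hF : ∀ i ∈ s, Differentiable ℝ (F i)) (w : P3) (p : P3) :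
    Dv w (fun q => ∑ i ∈ s, F i q) p = ∑ i ∈ s, Dv w (F i) p := by
  simp [Dv, fderiv_fun_sum (fun i hi => (hF i hi) p)]

lemma Dv_fst (m : Fin 3) (w : P3) (p : P3) :
    Dv w (fun q : P3 => q.1 m) p = w.1 m := by
  have h : HasFDerivAt (fun q : P3 => q.1 m)
      ((ContinuousLinearMap.proj m : E3 →L[ℝ] ℝ).comp
        (ContinuousLinearMap.fst ℝ E3 ℝ)) p :=
    ((ContinuousLinearMap.proj m : E3 →L[ℝ] ℝ).comp
        (ContinuousLinearMap.fst ℝ E3 ℝ)).hasFDerivAt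
  simp [Dv, h.fderiv]

lemma Dv_comm {F : P3 → ℝ} (hF : ContDiff ℝ (⊤ : ℕ∞) F) (w w' : P3) (p : P3) :
    Dv w (Dv w' F) p = Dv w' (Dv w F) p := by
  have hdiff : ∀ q, HasFDerivAt F (fderiv ℝ F q) q := fun q =>
    (hF.differentiable (by simp) q).hasFDerivAt
  have h2 : HasFDerivAt (fderiv ℝ F) (fderiv ℝ (fderiv ℝ F) p) p :=
    (((hF.fderiv_right (m := (⊤ : ℕ∞)) (by simp)).differentiable (by simp)) p).hasFDerivAt
  have hsymm := second_derivative_symmetric hdiff h2 w w'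
  have key : ∀ a b : P3,
      Dv a (Dv b F) p = fderiv ℝ (fderiv ℝ F) p a b := by
    intro a b
    have : Dv b F = fun q => (fderiv ℝ F q) b := rfl
    rw [Dv, this, fderiv_clm_apply
      (((hF.fderiv_right (m := (⊤ : ℕ∞)) (by simp)).differentiable (by simp)) p) (differentiableAt_const b)]
    simp
  rw [key w w', key w' w, hsymm]

lemma pd_eq {F : P3 → ℝ} (hF : Differentiable ℝ F) (i : Fin 3) (x : E3) (t : ℝ) :
    pd i (fun y => F (y, t)) x = Dv (ej i) F (x, t) := by
  have h1 : HasFDerivAt (fun y : E3 => ((y, t) : P3))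
      (ContinuousLinearMap.inl ℝ E3 ℝ) x :=
    HasFDerivAt.prodMk (hasFDerivAt_id x) (hasFDerivAt_const t x)
  have h2 : HasFDerivAt (fun y : E3 => F (y, t))
      ((fderiv ℝ F (x, t)).comp (ContinuousLinearMap.inl ℝ E3 ℝ)) x :=
    (hF (x, t)).hasFDerivAt.comp x h1
  rw [pd, h2.fderiv]
  rfl

lemma deriv_eq {F : P3 → ℝ} (hF : Differentiable ℝ F) (x : E3) (t : ℝ) :
    deriv (fun s => F (x, s)) t = Dv tau F (x, t) := by
  have h1 : HasFDerivAt (fun s : ℝ => ((x, s) : P3))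
      (ContinuousLinearMap.inr ℝ E3 ℝ) t :=
    HasFDerivAt.prodMk (hasFDerivAt_const x t) (hasFDerivAt_id t)
  have h2 : HasFDerivAt (fun s : ℝ => F (x, s))
      ((fderiv ℝ F (x, t)).comp (ContinuousLinearMap.inr ℝ E3 ℝ)) t :=
    (hF (x, t)).hasFDerivAt.comp t h1
  rw [h2.hasDerivAt.deriv]
  rfl

lemma lap_eq {F : P3 → ℝ} (hF : ContDiff ℝ (⊤ : ℕ∞) F) (x : E3) (t : ℝ) :
    lap (fun y => F (y, t)) x = ∑ j, Dv (ej j) (Dv (ej j) F) (x, t) := by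
  rw [lap]
  refine Finset.sum_congr rfl fun j _ => ?_
  have hfun : (fun y => pd j (fun z => F (z, t)) y) = fun y => Dv (ej j) F (y, t) :=
    funext fun y => pd_eq (hF.differentiable (by simp)) j y t
  rw [hfun, pd_eq ((Dv_contDiff hF (ej j)).differentiable (by simp)) j x t]

lemma Gam_eq {F : P3 → ℝ} (hF : ContDiff ℝ (⊤ : ℕ∞) F) (ν : ℝ)
    (u : (Fin 3 → ℝ) → ℝ → Fin 3 → ℝ) (x : E3) (t : ℝ) :
    Gam ν u (fun y s => F (y, s)) x t = GD ν (cmp u) F (x, t) := by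
  rw [Gam, GD, deriv_eq (hF.differentiable (by simp)), lap_eq hF]
  congr 2
  exact Finset.sum_congr rfl fun j _ => by
    rw [pd_eq (hF.differentiable (by simp)) j x t]; rfl

lemma GD_add {U : Fin 3 → P3 → ℝ} {F G : P3 → ℝ} (ν : ℝ)
    (hF : ContDiff ℝ (⊤ : ℕ∞) F) (hG : ContDiff ℝ (⊤ : ℕ∞) G) (p : P3) :
    GD ν U (fun q => F q + G q) p = GD ν U F p + GD ν U G p := by
  have hFd := hF.differentiable (by simp)
  have hGd := hG.differentiable (by simp)
  have h1 : ∀ w : P3, Dv w (fun q => F q + G q) = fun q => Dv w F q + Dv w G q :=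
    fun w => funext fun q => Dv_add hFd hGd w q
  have h2 : ∀ w : P3, Dv w (Dv w (fun q => F q + G q)) p
      = Dv w (Dv w F) p + Dv w (Dv w G) p := by
    intro w
    rw [h1 w]
    have := Dv_add ((Dv_contDiff hF w).differentiable (by simp))
      ((Dv_contDiff hG w).differentiable (by simp)) w p
    simpa using this
  simp only [GD, h2, Dv_add hFd hGd]
  simp only [Fin.sum_univ_three]
  ring

lemma GD_sum {U : Fin 3 → P3 → ℝ} {F : Fin 3 → P3 → ℝ} (ν : ℝ)
    (hF : ∀ m, ContDiff ℝ (⊤ : ℕ∞) (F m)) (p : P3) :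
    GD ν U (fun q => ∑ m, F m q) p = ∑ m, GD ν U (F m) p := by
  have hFd : ∀ m ∈ (Finset.univ : Finset (Fin 3)), Differentiable ℝ (F m) :=
    fun m _ => (hF m).differentiable (by simp)
  have h1 : ∀ w : P3, Dv w (fun q => ∑ m, F m q) = fun q => ∑ m, Dv w (F m) q :=
    fun w => funext fun q => Dv_sum _ _ hFd w q
  have h2 : ∀ w : P3, Dv w (Dv w (fun q => ∑ m, F m q)) p
      = ∑ m, Dv w (Dv w (F m)) p := by
    intro w
    rw [h1 w]
    have := Dv_sum Finset.univ (fun m => Dv w (F m))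
      (fun m _ => (Dv_contDiff (hF m) w).differentiable (by simp)) w p
    simpa using this
  simp only [GD, h2, Dv_sum _ _ hFd]
  simp only [Fin.sum_univ_three]
  ring

lemma GD_mul {U : Fin 3 → P3 → ℝ} {F G : P3 → ℝ} (ν : ℝ)
    (hF : ContDiff ℝ (⊤ : ℕ∞) F) (hG : ContDiff ℝ (⊤ : ℕ∞) G) (p : P3) :
    GD ν U (fun q => F q * G q) p
      = GD ν U F p * G p + F p * GD ν U G p
        - 2 * ν * ∑ j, Dv (ej j) F p * Dv (ej j) G p := by
  have hFd := hF.differentiable (by simp)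
  have hGd := hG.differentiable (by simp)
  have h1 : ∀ w : P3, Dv w (fun q => F q * G q)
      = fun q => Dv w F q * G q + F q * Dv w G q :=
    fun w => funext fun q => Dv_mul hFd hGd w q
  have h2 : ∀ w : P3, Dv w (Dv w (fun q => F q * G q)) p
      = Dv w (Dv w F) p * G p + 2 * (Dv w F p * Dv w G p) + F p * Dv w (Dv w G) p := by
    intro w
    rw [h1 w]
    have ha := ((Dv_contDiff hF w).differentiable (by simp)).mul hGd
    have hb := hFd.mul ((Dv_contDiff hG w).differentiable (by simp))
    have h3 := Dv_add ha hb w p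
    have h4 := Dv_mul ((Dv_contDiff hF w).differentiable (by simp)) hGd w p
    have h5 := Dv_mul hFd ((Dv_contDiff hG w).differentiable (by simp)) w p
    calc Dv w (fun q => Dv w F q * G q + F q * Dv w G q) p
        = Dv w (fun q => Dv w F q * G q) p + Dv w (fun q => F q * Dv w G q) p := h3
      _ = _ := by rw [h4, h5]; ring
  simp only [GD, h2, Dv_mul hFd hGd]
  simp only [Fin.sum_univ_three]
  ring

lemma GD_coord (ν : ℝ) (U : Fin 3 → P3 → ℝ) (m : Fin 3) (q : P3) :
    GD ν U (fun r : P3 => r.1 m) q = U m q := by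
  have h1 : ∀ w : P3, Dv w (fun r : P3 => r.1 m) = fun _ => w.1 m :=
    fun w => funext fun r => Dv_fst m w r
  simp only [GD, h1, Dv_const, Dv_fst]
  simp only [Fin.sum_univ_three, tau, ej]
  fin_cases m <;> simp [Pi.single_apply]

lemma GD_comm {U : Fin 3 → P3 → ℝ} {F : P3 → ℝ} (ν : ℝ)
    (hU : ∀ j, ContDiff ℝ (⊤ : ℕ∞) (U j)) (hF : ContDiff ℝ (⊤ : ℕ∞) F) (i : Fin 3) (p : P3) :
    Dv (ej i) (GD ν U F) p
      = GD ν U (Dv (ej i) F) p + ∑ j, Dv (ej i) (U j) p * Dv (ej j) F p := by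
  have hFd := hF.differentiable (by simp)
  have hUd : ∀ j, Differentiable ℝ (U j) := fun j => (hU j).differentiable (by simp)
  have hD1 : ∀ w : P3, Differentiable ℝ (Dv w F) :=
    fun w => (Dv_contDiff hF w).differentiable (by simp)
  have hD2 : ∀ w w' : P3, Differentiable ℝ (Dv w (Dv w' F)) :=
    fun w w' => (Dv_contDiff (Dv_contDiff hF w') w).differentiable (by simp)
  have hGDfun : GD ν U F = fun q =>
      Dv tau F q + ∑ j, U j q * Dv (ej j) F q
        - ν * ∑ j, Dv (ej j) (Dv (ej j) F) q := rfl
  have ha : Differentiable ℝ (Dv tau F) := hD1 tau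
  have hb : Differentiable ℝ (fun q => ∑ j, U j q * Dv (ej j) F q) :=
    Differentiable.fun_sum fun j _ => (hUd j).mul (hD1 (ej j))
  have hc0 : Differentiable ℝ (fun q => ∑ j, Dv (ej j) (Dv (ej j) F) q) :=
    Differentiable.fun_sum fun j _ => hD2 (ej j) (ej j)
  have hc : Differentiable ℝ (fun q => ν * ∑ j, Dv (ej j) (Dv (ej j) F) q) :=
    hc0.const_mul ν
  have hmul : ∀ j : Fin 3, Dv (ej i) (fun q => U j q * Dv (ej j) F q) p
      = Dv (ej i) (U j) p * Dv (ej j) F p + U j p * Dv (ej i) (Dv (ej j) F) p :=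
    fun j => Dv_mul (hUd j) (hD1 (ej j)) (ej i) p
  have split : Dv (ej i) (GD ν U F) p
      = Dv (ej i) (Dv tau F) p
        + ∑ j, (Dv (ej i) (U j) p * Dv (ej j) F p + U j p * Dv (ej i) (Dv (ej j) F) p)
        - ν * ∑ j, Dv (ej i) (Dv (ej j) (Dv (ej j) F)) p := by
    rw [hGDfun]
    have e1 := Dv_sub (ha.add hb) hc (ej i) p
    have e2 := Dv_add ha hb (ej i) p
    have e3 := Dv_const_mul hc0 ν (ej i) p
    have e4 := Dv_sum Finset.univ (fun j q => U j q * Dv (ej j) F q)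
      (fun j _ => (hUd j).mul (hD1 (ej j))) (ej i) p
    have e5 := Dv_sum Finset.univ (fun j => Dv (ej j) (Dv (ej j) F))
      (fun j _ => hD2 (ej j) (ej j)) (ej i) p
    calc Dv (ej i) (fun q => Dv tau F q + ∑ j, U j q * Dv (ej j) F q
          - ν * ∑ j, Dv (ej j) (Dv (ej j) F) q) p
        = Dv (ej i) (fun q => Dv tau F q + ∑ j, U j q * Dv (ej j) F q) p
          - Dv (ej i) (fun q => ν * ∑ j, Dv (ej j) (Dv (ej j) F) q) p := e1
      _ = _ := by
          rw [e2, e3]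
          have e4' : Dv (ej i) (fun q => ∑ j, U j q * Dv (ej j) F q) p
              = ∑ j, Dv (ej i) (fun q => U j q * Dv (ej j) F q) p := e4
          have e5' : Dv (ej i) (fun q => ∑ j, Dv (ej j) (Dv (ej j) F) q) p
              = ∑ j, Dv (ej i) (Dv (ej j) (Dv (ej j) F)) p := e5
          rw [e4', e5']
          congr 2
          exact Finset.sum_congr rfl fun j _ => hmul j
  have hc1 : Dv (ej i) (Dv tau F) p = Dv tau (Dv (ej i) F) p := Dv_comm hF _ _ p
  have hc2 : ∀ j : Fin 3, Dv (ej i) (Dv (ej j) F) p = Dv (ej j) (Dv (ej i) F) p :=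
    fun j => Dv_comm hF _ _ p
  have hc3 : ∀ j : Fin 3, Dv (ej i) (Dv (ej j) (Dv (ej j) F)) p
      = Dv (ej j) (Dv (ej j) (Dv (ej i) F)) p := by
    intro j
    have e1 : Dv (ej i) (Dv (ej j) F) = Dv (ej j) (Dv (ej i) F) :=
      funext fun q => Dv_comm hF _ _ q
    calc Dv (ej i) (Dv (ej j) (Dv (ej j) F)) p
        = Dv (ej j) (Dv (ej i) (Dv (ej j) F)) p :=
          Dv_comm (Dv_contDiff hF (ej j)) _ _ p
      _ = Dv (ej j) (Dv (ej j) (Dv (ej i) F)) p := by rw [e1]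
  rw [split]
  simp only [hc1, hc2, hc3, GD]
  simp only [Fin.sum_univ_three]
  ring

end CotAux

open CotAux

/-- If `Γℓ + u = 0` (i.e. `ΓA = 0` for `A = x + ℓ`) and
`Γv_i = 2ν C_{m,k;i} ∂_k v_m + Q_{ji} f_j`, then `w_i = (∂_i A_m) v_m` solves the
cotangent equation `Γw_i + (∂_i u_j) w_j = f_i`. -/
theorem cotangent_equation (ν : ℝ) (hν : 0 < ν) (L : ℝ) (hL : 0 < L)
    (u v f : (Fin 3 → ℝ) → ℝ → Fin 3 → ℝ)
    (ℓ : (Fin 3 → ℝ) → ℝ → Fin 3 → ℝ)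
    (A : (Fin 3 → ℝ) → ℝ → Fin 3 → ℝ)
    (hu : ContDiff ℝ (⊤ : ℕ∞) (fun p : (Fin 3 → ℝ) × ℝ => u p.1 p.2))
    (huper : ∀ (x : Fin 3 → ℝ) (t : ℝ) (i : Fin 3), u (x + Pi.single i L) t = u x t)
    (hv : ContDiff ℝ (⊤ : ℕ∞) (fun p : (Fin 3 → ℝ) × ℝ => v p.1 p.2))
    (hℓ : ContDiff ℝ (⊤ : ℕ∞) (fun p : (Fin 3 → ℝ) × ℝ => ℓ p.1 p.2))
    (hAdef : ∀ (x : Fin 3 → ℝ) (t : ℝ) (i : Fin 3), A x t i = x i + ℓ x t i)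
    (hℓeq : ∀ (x : Fin 3 → ℝ) (t : ℝ) (i : Fin 3),
      Gam ν u (fun y s => ℓ y s i) x t + u x t i = 0)
    (Q : (Fin 3 → ℝ) → ℝ → Fin 3 → Fin 3 → ℝ)
    (hQ : ContDiff ℝ (⊤ : ℕ∞) (fun p : (Fin 3 → ℝ) × ℝ => Q p.1 p.2))
    (hQ1 : ∀ (x : Fin 3 → ℝ) (t : ℝ) (m p : Fin 3),
      ∑ j, Q x t j m * pd j (fun y => A y t p) x = if m = p then (1:ℝ) else 0)
    (hQ2 : ∀ (x : Fin 3 → ℝ) (t : ℝ) (m p : Fin 3),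
      ∑ j, pd m (fun y => A y t j) x * Q x t p j = if m = p then (1:ℝ) else 0)
    (hveq : ∀ (x : Fin 3 → ℝ) (t : ℝ) (i : Fin 3),
      Gam ν u (fun y s => v y s i) x t =
        2 * ν * (∑ m, ∑ k,
            (∑ j, Q x t j i * pd j (fun y => pd k (fun z => A z t m) y) x)
              * pd k (fun y => v y t m) x)
          + ∑ j, Q x t j i * f x t j) :
    ∀ (x : Fin 3 → ℝ) (t : ℝ) (i : Fin 3),
      Gam ν u (fun y s => ∑ m, pd i (fun z => A z s m) y * v y s m) x t
        + ∑ j, pd i (fun y => u y t j) x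
            * (∑ m, pd j (fun z => A z t m) x * v x t m)
      = f x t i := by
  intro x t i
  have hUs : ∀ j, ContDiff ℝ (⊤ : ℕ∞) (cmp u j) := fun j => contDiff_pi.mp hu j
  have hVs : ∀ m, ContDiff ℝ (⊤ : ℕ∞) (cmp v m) := fun m => contDiff_pi.mp hv m
  have hLs : ∀ m, ContDiff ℝ (⊤ : ℕ∞) (cmp ℓ m) := fun m => contDiff_pi.mp hℓ m
  have hcoord : ∀ m : Fin 3, ContDiff ℝ (⊤ : ℕ∞) (fun q : P3 => q.1 m) := fun m =>
    ((ContinuousLinearMap.proj m : E3 →L[ℝ] ℝ).comp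
      (ContinuousLinearMap.fst ℝ E3 ℝ)).contDiff
  have hAs : ∀ m, ContDiff ℝ (⊤ : ℕ∞) (Afun ℓ m) := fun m => (hcoord m).add (hLs m)
  have hpdA : ∀ (y : E3) (s : ℝ) (j m : Fin 3),
      pd j (fun z => A z s m) y = Dv (ej j) (Afun ℓ m) (y, s) := by
    intro y s j m
    have hfe : (fun z => A z s m) = fun z => Afun ℓ m (z, s) :=
      funext fun z => by rw [hAdef]; rfl
    rw [hfe]
    exact pd_eq ((hAs m).differentiable (by simp)) j y s
  have hpdv : ∀ (y : E3) (s : ℝ) (k m : Fin 3),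
      pd k (fun z => v z s m) y = Dv (ej k) (cmp v m) (y, s) :=
    fun y s k m => pd_eq ((hVs m).differentiable (by simp)) k y s
  have hpdu : ∀ (y : E3) (s : ℝ) (k j : Fin 3),
      pd k (fun z => u z s j) y = Dv (ej k) (cmp u j) (y, s) :=
    fun y s k j => pd_eq ((hUs j).differentiable (by simp)) k y s
  have hpdpdA : ∀ (y : E3) (s : ℝ) (j k m : Fin 3),
      pd j (fun z => pd k (fun z' => A z' s m) z) y
        = Dv (ej j) (Dv (ej k) (Afun ℓ m)) (y, s) := by
    intro y s j k m
    have hfe : (fun z => pd k (fun z' => A z' s m) z)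
        = fun z => Dv (ej k) (Afun ℓ m) (z, s) :=
      funext fun z => hpdA z s k m
    rw [hfe]
    exact pd_eq ((Dv_contDiff (hAs m) (ej k)).differentiable (by simp)) j y s
  have hA0 : ∀ m, GD ν (cmp u) (Afun ℓ m) = fun _ : P3 => (0:ℝ) := by
    intro m
    funext q
    have h1 : GD ν (cmp u) (Afun ℓ m) q
        = GD ν (cmp u) (fun r : P3 => r.1 m) q + GD ν (cmp u) (cmp ℓ m) q :=
      GD_add ν (hcoord m) (hLs m) q
    have h2 : GD ν (cmp u) (fun r : P3 => r.1 m) q = cmp u m q :=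
      GD_coord ν (cmp u) m q
    have h3 : Gam ν u (fun y s => ℓ y s m) q.1 q.2 = GD ν (cmp u) (cmp ℓ m) q :=
      Gam_eq (hLs m) ν u q.1 q.2
    have h4 : cmp u m q = u q.1 q.2 m := rfl
    have h5 := hℓeq q.1 q.2 m
    show GD ν (cmp u) (Afun ℓ m) q = 0
    linarith [h1, h2, h3, h4, h5]
  have hK1 : ∀ m, GD ν (cmp u) (Dv (ej i) (Afun ℓ m)) (x, t)
      = -∑ j, Dv (ej i) (cmp u j) (x, t) * Dv (ej j) (Afun ℓ m) (x, t) := by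
    intro m
    have h := GD_comm ν hUs (hAs m) i (x, t)
    rw [hA0 m] at h
    rw [Dv_const 0 (ej i) (x, t)] at h
    linarith [h]
  have hK2 : ∀ m, GD ν (cmp u) (cmp v m) (x, t)
      = 2 * ν * (∑ m', ∑ k,
          (∑ j, cmp2 Q j m (x, t) * Dv (ej j) (Dv (ej k) (Afun ℓ m')) (x, t))
            * Dv (ej k) (cmp v m') (x, t))
        + ∑ j, cmp2 Q j m (x, t) * cmp f j (x, t) := by
    intro m
    have hg : Gam ν u (fun y s => v y s m) x t = GD ν (cmp u) (cmp v m) (x, t) :=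
      Gam_eq (hVs m) ν u x t
    rw [← hg, hveq x t m]
    simp only [hpdpdA, hpdv]
    rfl
  have hK4 : ∀ j, (∑ m, Dv (ej i) (Afun ℓ m) (x, t) * cmp2 Q j m (x, t))
      = if i = j then (1:ℝ) else 0 := by
    intro j
    have h := hQ2 x t i j
    simp only [hpdA] at h
    exact h
  have hgroup : ∀ g : Fin 3 → ℝ,
      (∑ j, (∑ m, Dv (ej i) (Afun ℓ m) (x, t) * cmp2 Q j m (x, t)) * g j) = g i := by
    intro g
    calc (∑ j, (∑ m, Dv (ej i) (Afun ℓ m) (x, t) * cmp2 Q j m (x, t)) * g j)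
        = ∑ j, (if i = j then (1:ℝ) else 0) * g j :=
          Finset.sum_congr rfl fun j _ => by rw [hK4 j]
      _ = g i := by simp [ite_mul]
  have hcomm : ∀ (k m : Fin 3), Dv (ej k) (Dv (ej i) (Afun ℓ m)) (x, t)
      = Dv (ej i) (Dv (ej k) (Afun ℓ m)) (x, t) :=
    fun k m => Dv_comm (hAs m) _ _ (x, t)
  have hWs : ContDiff ℝ (⊤ : ℕ∞) (fun q : P3 => ∑ m, Dv (ej i) (Afun ℓ m) q * cmp v m q) :=
    ContDiff.sum fun m _ => (Dv_contDiff (hAs m) (ej i)).mul (hVs m)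
  have hGoalGam : Gam ν u (fun y s => ∑ m, pd i (fun z => A z s m) y * v y s m) x t
      = GD ν (cmp u) (fun q : P3 => ∑ m, Dv (ej i) (Afun ℓ m) q * cmp v m q) (x, t) := by
    have hfe : (fun (y : Fin 3 → ℝ) (s : ℝ) =>
          ∑ m, pd i (fun z => A z s m) y * v y s m)
        = fun y s => ∑ m, Dv (ej i) (Afun ℓ m) (y, s) * cmp v m (y, s) := by
      funext y s
      exact Finset.sum_congr rfl fun m _ => by rw [hpdA y s i m]; rfl
    rw [hfe]
    exact Gam_eq hWs ν u x t
  have hK3 : GD ν (cmp u)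
        (fun q : P3 => ∑ m, Dv (ej i) (Afun ℓ m) q * cmp v m q) (x, t)
      = ∑ m, GD ν (cmp u) (fun q => Dv (ej i) (Afun ℓ m) q * cmp v m q) (x, t) :=
    GD_sum ν (fun m => (Dv_contDiff (hAs m) (ej i)).mul (hVs m)) (x, t)
  have hK3m : ∀ m, GD ν (cmp u) (fun q => Dv (ej i) (Afun ℓ m) q * cmp v m q) (x, t)
      = GD ν (cmp u) (Dv (ej i) (Afun ℓ m)) (x, t) * cmp v m (x, t)
        + Dv (ej i) (Afun ℓ m) (x, t) * GD ν (cmp u) (cmp v m) (x, t)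
        - 2 * ν * ∑ k, Dv (ej k) (Dv (ej i) (Afun ℓ m)) (x, t)
            * Dv (ej k) (cmp v m) (x, t) :=
    fun m => GD_mul ν (Dv_contDiff (hAs m) (ej i)) (hVs m) (x, t)
  rw [hGoalGam, hK3]
  simp only [hpdu, hpdA]
  have hvv : ∀ m : Fin 3, v x t m = cmp v m (x, t) := fun _ => rfl
  have hff : f x t i = cmp f i (x, t) := rfl
  simp only [hvv]
  rw [hff]
  have hfin := hgroup (fun j =>
    2 * ν * (∑ m, ∑ k, Dv (ej j) (Dv (ej k) (Afun ℓ m)) (x, t)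
      * Dv (ej k) (cmp v m) (x, t)) + cmp f j (x, t))
  have e0 := hK3m 0
  have e1 := hK3m 1
  have e2 := hK3m 2
  have k10 := hK1 0
  have k11 := hK1 1
  have k12 := hK1 2
  have k20 := hK2 0
  have k21 := hK2 1
  have k22 := hK2 2
  have c00 := hcomm 0 0
  have c01 := hcomm 0 1
  have c02 := hcomm 0 2
  have c10 := hcomm 1 0
  have c11 := hcomm 1 1
  have c12 := hcomm 1 2
  have c20 := hcomm 2 0
  have c21 := hcomm 2 1
  have c22 := hcomm 2 2
  simp only [Fin.sum_univ_three] at e0 e1 e2 k10 k11 k12 k20 k21 k22 hfin ⊢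
  linear_combination e0 + e1 + e2
    + cmp v 0 (x, t) * k10 + cmp v 1 (x, t) * k11 + cmp v 2 (x, t) * k12
    + Dv (ej i) (Afun ℓ 0) (x, t) * k20
    + Dv (ej i) (Afun ℓ 1) (x, t) * k21
    + Dv (ej i) (Afun ℓ 2) (x, t) * k22
    + hfin
    - (2 * ν * Dv (ej 0) (cmp v 0) (x, t)) * c00
    - (2 * ν * Dv (ej 0) (cmp v 1) (x, t)) * c01
    - (2 * ν * Dv (ej 0) (cmp v 2) (x, t)) * c02
    - (2 * ν * Dv (ej 1) (cmp v 0) (x, t)) * c10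
    - (2 * ν * Dv (ej 1) (cmp v 1) (x, t)) * c11
    - (2 * ν * Dv (ej 1) (cmp v 2) (x, t)) * c12
    - (2 * ν * Dv (ej 2) (cmp v 0) (x, t)) * c20
    - (2 * ν * Dv (ej 2) (cmp v 1) (x, t)) * c21
    - (2 * ν * Dv (ej 2) (cmp v 2) (x, t)) * c22
end
end

section
/- Gauge invariance of the virtual velocity equation: if Γφ = 0 for a smooth scalar φ and v solves Γv_i = 2ν C_{m,k;i}∂_k v_m + Q_{ji}f_j, then ṽ = v + ∇_A φ (ṽ_i = v_i + Q_{ji}∂_j φ) solves the same equation. -/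
open scoped BigOperators

noncomputable section

lemma sliceS {F : (Fin 3 → ℝ) → ℝ → ℝ}
    (hF : ContDiff ℝ (⊤ : ℕ∞) (fun p : (Fin 3 → ℝ) × ℝ => F p.1 p.2)) (t : ℝ) :
    ContDiff ℝ (⊤ : ℕ∞) (fun y => F y t) :=
  hF.comp (contDiff_id.prodMk contDiff_const)

lemma sliceT {F : (Fin 3 → ℝ) → ℝ → ℝ}
    (hF : ContDiff ℝ (⊤ : ℕ∞) (fun p : (Fin 3 → ℝ) × ℝ => F p.1 p.2)) (x : Fin 3 → ℝ) :
    ContDiff ℝ (⊤ : ℕ∞) (fun s => F x s) :=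
  hF.comp (contDiff_const.prodMk contDiff_id)

lemma pd_add {f g : (Fin 3 → ℝ) → ℝ} {x : Fin 3 → ℝ} (j : Fin 3)
    (hf : DifferentiableAt ℝ f x) (hg : DifferentiableAt ℝ g x) :
    pd j (fun y => f y + g y) x = pd j f x + pd j g x := by
  simp [pd, fderiv_fun_add hf hg]

lemma pd_eq_fderiv {F : (Fin 3 → ℝ) → ℝ → ℝ}
    (hF : ContDiff ℝ (⊤ : ℕ∞) (fun p : (Fin 3 → ℝ) × ℝ => F p.1 p.2)) (j : Fin 3)
    (t : ℝ) (x : Fin 3 → ℝ) :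
    pd j (fun y => F y t) x
      = fderiv ℝ (fun p : (Fin 3 → ℝ) × ℝ => F p.1 p.2) (x, t) (Pi.single j 1, 0) := by
  have hc : HasFDerivAt (fun y : Fin 3 → ℝ => ((y, t) : (Fin 3 → ℝ) × ℝ))
      ((ContinuousLinearMap.id ℝ (Fin 3 → ℝ)).prod 0) x :=
    (hasFDerivAt_id x).prodMk (hasFDerivAt_const t x)
  have hFd := (hF.differentiable (by simp) (x, t)).hasFDerivAt
  have h := (hFd.comp x hc).fderiv
  simp only [pd]
  rw [show (fun y => F y t) = (fun p : (Fin 3 → ℝ) × ℝ => F p.1 p.2) ∘ (fun y => (y, t)) from rfl, h]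
  rfl

lemma pd_smooth {F : (Fin 3 → ℝ) → ℝ → ℝ}
    (hF : ContDiff ℝ (⊤ : ℕ∞) (fun p : (Fin 3 → ℝ) × ℝ => F p.1 p.2)) (j : Fin 3) :
    ContDiff ℝ (⊤ : ℕ∞) (fun p : (Fin 3 → ℝ) × ℝ => pd j (fun y => F y p.2) p.1) := by
  have h1 : ContDiff ℝ (⊤ : ℕ∞) (fun p : (Fin 3 → ℝ) × ℝ =>
      fderiv ℝ (fun q : (Fin 3 → ℝ) × ℝ => F q.1 q.2) p (Pi.single j 1, 0)) :=
    (hF.fderiv_right (by simp)).clm_apply contDiff_const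
  have : (fun p : (Fin 3 → ℝ) × ℝ => pd j (fun y => F y p.2) p.1)
      = fun p : (Fin 3 → ℝ) × ℝ =>
        fderiv ℝ (fun q : (Fin 3 → ℝ) × ℝ => F q.1 q.2) p (Pi.single j 1, 0) := by
    funext p
    exact pd_eq_fderiv hF j p.2 p.1
  rw [this]; exact h1

lemma Gam_add (ν : ℝ) (u : (Fin 3 → ℝ) → ℝ → Fin 3 → ℝ)
    {F G : (Fin 3 → ℝ) → ℝ → ℝ}
    (hF : ContDiff ℝ (⊤ : ℕ∞) (fun p : (Fin 3 → ℝ) × ℝ => F p.1 p.2))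
    (hG : ContDiff ℝ (⊤ : ℕ∞) (fun p : (Fin 3 → ℝ) × ℝ => G p.1 p.2))
    (x : Fin 3 → ℝ) (t : ℝ) :
    Gam ν u (fun y s => F y s + G y s) x t = Gam ν u F x t + Gam ν u G x t := by
  have hpd : ∀ (j : Fin 3) (y : Fin 3 → ℝ),
      pd j (fun z => F z t + G z t) y = pd j (fun z => F z t) y + pd j (fun z => G z t) y :=
    fun j y => pd_add j (((sliceS hF t).differentiable (by simp)) y)
      (((sliceS hG t).differentiable (by simp)) y)
  have hdt : deriv (fun s => F x s + G x s) t
      = deriv (fun s => F x s) t + deriv (fun s => G x s) t :=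
    deriv_fun_add (((sliceT hF x).differentiable (by simp)) t)
      (((sliceT hG x).differentiable (by simp)) t)
  have hlap : lap (fun y => F y t + G y t) x
      = lap (fun y => F y t) x + lap (fun y => G y t) x := by
    unfold lap
    rw [← Finset.sum_add_distrib]
    refine Finset.sum_congr rfl fun i _ => ?_
    have h1 : (fun y => pd i (fun z => F z t + G z t) y)
        = fun y => pd i (fun z => F z t) y + pd i (fun z => G z t) y := funext (hpd i)
    rw [h1]
    exact pd_add i
      ((((pd_smooth hF i).comp (contDiff_id.prodMk contDiff_const)).differentiable (by simp)) x)
      ((((pd_smooth hG i).comp (contDiff_id.prodMk contDiff_const)).differentiable (by simp)) x)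
  simp only [Gam, hdt, hlap, hpd, mul_add, Finset.sum_add_distrib]
  ring

lemma pd_zero (j : Fin 3) (x : Fin 3 → ℝ) : pd j (fun _ => (0:ℝ)) x = 0 := by
  simp [pd]

/-- Gauge invariance of the virtual velocity equation: if `Γφ = 0` and
`v` solves `Γv_i = 2ν C_{m,k;i} ∂_k v_m + Q_{ji} f_j`, then `ṽ_i = v_i + Q_{ji} ∂_j φ`
solves the same equation. -/
theorem virtual_velocity_gauge_invariance (ν : ℝ) (hν : 0 < ν)
    (u v f : (Fin 3 → ℝ) → ℝ → Fin 3 → ℝ)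
    (A : (Fin 3 → ℝ) → ℝ → Fin 3 → ℝ)
    (φ : (Fin 3 → ℝ) → ℝ → ℝ)
    (hu : ContDiff ℝ (⊤ : ℕ∞) (fun p : (Fin 3 → ℝ) × ℝ => u p.1 p.2))
    (hdiv : ∀ (x : Fin 3 → ℝ) (t : ℝ), ∑ j, pd j (fun y => u y t j) x = 0)
    (hv : ContDiff ℝ (⊤ : ℕ∞) (fun p : (Fin 3 → ℝ) × ℝ => v p.1 p.2))
    (hA : ContDiff ℝ (⊤ : ℕ∞) (fun p : (Fin 3 → ℝ) × ℝ => A p.1 p.2))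
    (hφ : ContDiff ℝ (⊤ : ℕ∞) (fun p : (Fin 3 → ℝ) × ℝ => φ p.1 p.2))
    (hAeq : ∀ (x : Fin 3 → ℝ) (t : ℝ) (m : Fin 3),
      Gam ν u (fun y s => A y s m) x t = 0)
    (Q : (Fin 3 → ℝ) → ℝ → Fin 3 → Fin 3 → ℝ)
    (hQ : ContDiff ℝ (⊤ : ℕ∞) (fun p : (Fin 3 → ℝ) × ℝ => Q p.1 p.2))
    (hQ1 : ∀ (x : Fin 3 → ℝ) (t : ℝ) (m p : Fin 3),
      ∑ j, Q x t j m * pd j (fun y => A y t p) x = if m = p then (1:ℝ) else 0)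
    (hQ2 : ∀ (x : Fin 3 → ℝ) (t : ℝ) (m p : Fin 3),
      ∑ j, pd m (fun y => A y t j) x * Q x t p j = if m = p then (1:ℝ) else 0)
    (hQeq : ∀ (x : Fin 3 → ℝ) (t : ℝ) (j i : Fin 3),
      Gam ν u (fun y s => Q y s j i) x t
        = (∑ k, pd k (fun y => u y t j) x * Q x t k i)
          + 2 * ν * ∑ k, ∑ a, ∑ b,
              Q x t j a * pd k (fun y => pd a (fun z => A z t b) y) x
                * pd k (fun y => Q y t b i) x)
    -- the commutation relation `[Γ, ∇_A^i] g = 2ν C_{m,k;i} ∂_k (∇_A^m g)`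
    (hcomm : ∀ g : (Fin 3 → ℝ) → ℝ → ℝ,
      ContDiff ℝ (⊤ : ℕ∞) (fun p : (Fin 3 → ℝ) × ℝ => g p.1 p.2) →
      ∀ (x : Fin 3 → ℝ) (t : ℝ) (i : Fin 3),
        Gam ν u (fun y s => ∑ j, Q y s j i * pd j (fun z => g z s) y) x t
          - ∑ j, Q x t j i * pd j (fun y => Gam ν u g y t) x =
        2 * ν * ∑ m, ∑ k,
          (∑ j, Q x t j i * pd j (fun y => pd k (fun z => A z t m) y) x)
            * pd k (fun y => ∑ j, Q y t j m * pd j (fun z => g z t) y) x)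
    (hφeq : ∀ (x : Fin 3 → ℝ) (t : ℝ), Gam ν u φ x t = 0)
    (hveq : ∀ (x : Fin 3 → ℝ) (t : ℝ) (i : Fin 3),
      Gam ν u (fun y s => v y s i) x t =
        2 * ν * (∑ m, ∑ k,
            (∑ j, Q x t j i * pd j (fun y => pd k (fun z => A z t m) y) x)
              * pd k (fun y => v y t m) x)
          + ∑ j, Q x t j i * f x t j) :
    ∀ (x : Fin 3 → ℝ) (t : ℝ) (i : Fin 3),
      Gam ν u (fun y s => v y s i + ∑ j, Q y s j i * pd j (fun z => φ z s) y) x t =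
        2 * ν * (∑ m, ∑ k,
            (∑ j, Q x t j i * pd j (fun y => pd k (fun z => A z t m) y) x)
              * pd k (fun y => v y t m + ∑ j, Q y t j m * pd j (fun z => φ z t) y) x)
          + ∑ j, Q x t j i * f x t j := by
  intro x t i
  -- smoothness of W m = ∇_A^m φ
  have hWsm : ∀ m : Fin 3, ContDiff ℝ (⊤ : ℕ∞) (fun p : (Fin 3 → ℝ) × ℝ =>
      ∑ j, Q p.1 p.2 j m * pd j (fun z => φ z p.2) p.1) := by
    intro m
    apply ContDiff.sum
    intro j _
    exact (contDiff_pi.mp (contDiff_pi.mp hQ j) m).mul (pd_smooth hφ j)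
  have hvm : ∀ m : Fin 3, ContDiff ℝ (⊤ : ℕ∞) (fun p : (Fin 3 → ℝ) × ℝ => v p.1 p.2 m) :=
    fun m => contDiff_pi.mp hv m
  -- split Gam of the sum
  have hsplit : Gam ν u (fun y s => v y s i + ∑ j, Q y s j i * pd j (fun z => φ z s) y) x t
      = Gam ν u (fun y s => v y s i) x t
        + Gam ν u (fun y s => ∑ j, Q y s j i * pd j (fun z => φ z s) y) x t :=
    Gam_add ν u (hvm i) (hWsm i) x t
  -- Gam of gauge term from hcomm
  have hzero : (fun y => Gam ν u φ y t) = fun _ => (0:ℝ) := funext fun y => hφeq y t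
  have hW : Gam ν u (fun y s => ∑ j, Q y s j i * pd j (fun z => φ z s) y) x t
      = 2 * ν * ∑ m, ∑ k,
          (∑ j, Q x t j i * pd j (fun y => pd k (fun z => A z t m) y) x)
            * pd k (fun y => ∑ j, Q y t j m * pd j (fun z => φ z t) y) x := by
    have h := hcomm φ hφ x t i
    rw [hzero] at h
    simp only [pd_zero, mul_zero, Finset.sum_const_zero, sub_zero] at h
    exact h
  -- split pd on RHS
  have hpdsplit : ∀ (m k : Fin 3),
      pd k (fun y => v y t m + ∑ j, Q y t j m * pd j (fun z => φ z t) y) x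
        = pd k (fun y => v y t m) x
          + pd k (fun y => ∑ j, Q y t j m * pd j (fun z => φ z t) y) x := fun m k =>
    pd_add k (((sliceS (F := fun y s => v y s m) (hvm m) t).differentiable (by simp)) x)
      (((sliceS (F := fun y s => ∑ j, Q y s j m * pd j (fun z => φ z s) y) (hWsm m) t).differentiable (by simp)) x)
  rw [hsplit, hW, hveq x t i]
  simp only [hpdsplit, mul_add, Finset.sum_add_distrib, Finset.mul_sum]
  ring
end
end
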